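/- arXiv:1104.5546 — 8 statements merged into one kernel-verified Lean document; each statement's English description precedes it below -/
import Mathlib

section
/- There exist d₀ > 0 and a constant κ' < ∞ such that the following holds for every real β > 1/2 and every 0 < d < d₀: if p is a probability mass function on the positive integers with finite mean μ and Shannon entropy H(p) ≥ (1 − d^β)·μ, then ∑_{l≥1} |p(l) − 2^{−l}| ≤ κ'·d^{β/2}. -/
/-!
Write `q l = 2⁻ˡ`. Since `log q l = -l log 2`, the divergence `∑ p log (p / q)` equals
`log 2 · (μ - H)` and so is at most `log 2 · dᵝ · μ`. The pointwise inequality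
`x log (x / y) - x + y ≥ (√x - √y)²` bounds the squared Hellinger distance by this divergence, and
`|x - y| ≤ (√x - √y)² / (2ε) + ε (x + y)` with `ε = d^(β/2)` turns a Hellinger bound `O(ε²)`
into an `L¹` bound `O(ε)`. The mean is bounded because the same pointwise inequality against the
weights `2^(-l/4)` (Gibbs) gives `H ≤ μ / 4 + O(1)`, whereas `H ≥ μ / 2`.
-/

open Real

section Hellinger

variable {ι : Type*}

lemma negMulLog_add_sq_sqrt_sub_sqrt_le {x y : ℝ} (hx : 0 ≤ x) (hy : 0 < y) :
    negMulLog x + (√x - √y) ^ 2 ≤ -(x * log y) + y - x := by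
  rcases hx.eq_or_lt with rfl | hx
  · simp [sq_sqrt hy.le]
  have hsx := sqrt_pos.2 hx
  -- `log s ≤ s - 1` at `s = √y / √x`, multiplied by `2x`
  have key := log_le_sub_one_of_pos (div_pos (sqrt_pos.2 hy) hsx)
  rw [log_div (sqrt_pos.2 hy).ne' hsx.ne', log_sqrt hy.le, log_sqrt hx.le] at key
  have hmul : x * (√y / √x) = √x * √y := by
    field_simp
    rw [sq_sqrt hx.le]
  have key₂ := mul_le_mul_of_nonneg_left key (by positivity : 0 ≤ 2 * x)
  rw [negMulLog, sub_sq, sq_sqrt hx.le, sq_sqrt hy.le]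
  nlinarith

lemma summable_negMulLog_of_le_one {p g : ι → ℝ} (hp0 : ∀ i, 0 ≤ p i) (hp1 : ∀ i, p i ≤ 1)
    (hg0 : ∀ i, 0 < g i) (hp : Summable p) (hg : Summable g)
    (hpg : Summable fun i => p i * log (g i)) :
    Summable fun i => negMulLog (p i) :=
  Summable.of_nonneg_of_le (fun i => negMulLog_nonneg (hp0 i) (hp1 i))
    (fun i => by
      linarith [negMulLog_add_sq_sqrt_sub_sqrt_le (hp0 i) (hg0 i), sq_nonneg (√(p i) - √(g i))])
    ((hpg.neg.add hg).sub hp)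

lemma tsum_negMulLog_add_tsum_sq_sqrt_sub_sqrt_le {p g : ι → ℝ} (hp0 : ∀ i, 0 ≤ p i)
    (hg0 : ∀ i, 0 < g i) (hp : Summable p) (hg : Summable g)
    (hpg : Summable fun i => p i * log (g i)) (hH : Summable fun i => negMulLog (p i)) :
    ∑' i, negMulLog (p i) + ∑' i, (√(p i) - √(g i)) ^ 2 ≤
      -∑' i, p i * log (g i) + ∑' i, g i - ∑' i, p i := by
  have hle i := negMulLog_add_sq_sqrt_sub_sqrt_le (hp0 i) (hg0 i)
  have hsq : Summable fun i => (√(p i) - √(g i)) ^ 2 :=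
    Summable.of_nonneg_of_le (fun i => sq_nonneg _)
      (fun i => by linarith [hle i]) (((hpg.neg.add hg).sub hp).sub hH)
  exact hasSum_le hle (hH.hasSum.add hsq.hasSum) ((hpg.hasSum.neg.add hg.hasSum).sub hp.hasSum)

-- `|x - y| = |√x - √y| (√x + √y)`, then AM-GM and `(√x + √y) ^ 2 ≤ 2 (x + y)`
lemma abs_sub_le_sq_sqrt_sub_sqrt_div_add {x y ε : ℝ} (hx : 0 ≤ x) (hy : 0 ≤ y) (hε : 0 < ε) :
    |x - y| ≤ (√x - √y) ^ 2 / (2 * ε) + ε * (x + y) := by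
  have hxa := sq_sqrt hx
  have hyb := sq_sqrt hy
  have ha := sqrt_nonneg x
  have hb := sqrt_nonneg y
  rw [abs_sub_le_iff]
  constructor <;> rw [div_add' _ _ _ (by positivity), le_div_iff₀ (by positivity)] <;>
    nlinarith [sq_nonneg ((√x - √y) - ε * (√x + √y)), sq_nonneg ((√x - √y) + ε * (√x + √y)),
      sq_nonneg (√x - √y), mul_pos hε hε]

lemma tsum_abs_sub_le {p q : ι → ℝ} (hp0 : ∀ i, 0 ≤ p i) (hq0 : ∀ i, 0 ≤ q i)
    (hp : Summable p) (hq : Summable q) {ε : ℝ} (hε : 0 < ε) :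
    ∑' i, |p i - q i| ≤
      (∑' i, (√(p i) - √(q i)) ^ 2) / (2 * ε) + ε * (∑' i, p i + ∑' i, q i) := by
  have hsq : Summable fun i => (√(p i) - √(q i)) ^ 2 :=
    Summable.of_nonneg_of_le (fun i => sq_nonneg _)
      (fun i => by
        rw [sub_sq, sq_sqrt (hp0 i), sq_sqrt (hq0 i)]
        nlinarith [sqrt_nonneg (p i), sqrt_nonneg (q i)])
      (hp.add hq)
  exact hasSum_le (fun i => abs_sub_le_sq_sqrt_sub_sqrt_div_add (hp0 i) (hq0 i) hε)
    (hp.sub hq).abs.hasSum ((hsq.hasSum.div_const _).add ((hp.hasSum.add hq.hasSum).mul_left ε))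

end Hellinger

section PNat

variable {p : ℕ+ → ℝ}

lemma summable_of_summable_coe_mul (hp0 : ∀ l, 0 ≤ p l)
    (hμ : Summable fun l : ℕ+ => (l : ℝ) * p l) : Summable p :=
  Summable.of_nonneg_of_le hp0 (fun l => le_mul_of_one_le_left (hp0 l) (Nat.one_le_cast.2 l.pos))
    hμ

lemma summable_geometric_pnat {r : ℝ} (h0 : 0 ≤ r) (h1 : r < 1) :
    Summable fun l : ℕ+ => r ^ (l : ℕ) :=
  summable_pnat_iff_summable_nat.2 (summable_geometric_of_lt_one h0 h1)

lemma tsum_geometric_two_pnat : ∑' l : ℕ+, ((1 : ℝ) / 2) ^ (l : ℕ) = 1 := by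
  have h := tsum_zero_pnat_eq_tsum_nat summable_geometric_two
  rw [tsum_geometric_two, pow_zero] at h
  linarith

lemma tsum_mul_log_geometric (r : ℝ) :
    ∑' l : ℕ+, p l * log (r ^ (l : ℕ)) = log r * ∑' l : ℕ+, (l : ℝ) * p l := by
  rw [← tsum_mul_left]
  exact tsum_congr fun l => by rw [log_pow]; ring

lemma summable_mul_log_geometric (hμ : Summable fun l : ℕ+ => (l : ℝ) * p l) (r : ℝ) :
    Summable fun l : ℕ+ => p l * log (r ^ (l : ℕ)) :=
  (hμ.mul_left (log r)).congr fun l => by rw [log_pow]; ring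

lemma summable_negMulLog_of_summable_coe_mul (hp0 : ∀ l, 0 ≤ p l) (hp1 : ∑' l, p l = 1)
    (hμ : Summable fun l : ℕ+ => (l : ℝ) * p l) : Summable fun l => negMulLog (p l) := by
  have hp := summable_of_summable_coe_mul hp0 hμ
  exact summable_negMulLog_of_le_one hp0 (fun l => hp1 ▸ hp.le_tsum l fun j _ => hp0 j)
    (g := fun l : ℕ+ => ((1 : ℝ) / 2) ^ (l : ℕ)) (fun l => by positivity) hp
    (summable_geometric_pnat (by norm_num) (by norm_num)) (summable_mul_log_geometric hμ _)

lemma tsum_negMulLog_add_tsum_sq_sqrt_sub_sqrt_geometric_le (hp0 : ∀ l, 0 ≤ p l)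
    (hp1 : ∑' l, p l = 1) (hμ : Summable fun l : ℕ+ => (l : ℝ) * p l) {r : ℝ} (h0 : 0 < r)
    (h1 : r < 1) :
    ∑' l, negMulLog (p l) + ∑' l : ℕ+, (√(p l) - √(r ^ (l : ℕ))) ^ 2 ≤
      -log r * ∑' l : ℕ+, (l : ℝ) * p l + ∑' l : ℕ+, r ^ (l : ℕ) - 1 := by
  have h := tsum_negMulLog_add_tsum_sq_sqrt_sub_sqrt_le hp0 (fun l => pow_pos h0 _)
    (summable_of_summable_coe_mul hp0 hμ) (summable_geometric_pnat h0.le h1)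
    (summable_mul_log_geometric hμ r) (summable_negMulLog_of_summable_coe_mul hp0 hp1 hμ)
  rwa [tsum_mul_log_geometric, hp1, ← neg_mul] at h

lemma log_two_mul_tsum_coe_mul_le (hp0 : ∀ l, 0 ≤ p l) (hp1 : ∑' l, p l = 1)
    (hμ : Summable fun l : ℕ+ => (l : ℝ) * p l)
    (hH : log 2 * (∑' l : ℕ+, (l : ℝ) * p l) / 2 ≤ ∑' l, negMulLog (p l)) :
    log 2 * ∑' l : ℕ+, (l : ℝ) * p l ≤
      4 * (∑' l : ℕ+, ((1 / 2 : ℝ) ^ (1 / 4 : ℝ)) ^ (l : ℕ) - 1) := by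
  set r : ℝ := (1 / 2) ^ (1 / 4 : ℝ) with hr
  have hlogr : log r = -(log 2 / 4) := by
    rw [hr, log_rpow (by norm_num), one_div 2, log_inv]; ring
  have h := tsum_negMulLog_add_tsum_sq_sqrt_sub_sqrt_geometric_le hp0 hp1 hμ
    (r := r) (by positivity) (rpow_lt_one (by norm_num) (by norm_num) (by norm_num))
  rw [hlogr] at h
  nlinarith [(tsum_nonneg fun l => sq_nonneg _ : 0 ≤ ∑' l : ℕ+, (√(p l) - √(r ^ (l : ℕ))) ^ 2)]

lemma tsum_sq_sqrt_sub_sqrt_half_pow_le (hp0 : ∀ l, 0 ≤ p l) (hp1 : ∑' l, p l = 1)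
    (hμ : Summable fun l : ℕ+ => (l : ℝ) * p l) :
    ∑' l : ℕ+, (√(p l) - √((1 / 2 : ℝ) ^ (l : ℕ))) ^ 2 ≤
      log 2 * ∑' l : ℕ+, (l : ℝ) * p l - ∑' l, negMulLog (p l) := by
  have h := tsum_negMulLog_add_tsum_sq_sqrt_sub_sqrt_geometric_le hp0 hp1 hμ
    (r := 1 / 2) (by norm_num) (by norm_num)
  rw [tsum_geometric_two_pnat, one_div 2, log_inv] at h
  linarith

end PNat

lemma rpow_le_half_of_lt_quarter {β d : ℝ} (hβ : 1 / 2 < β) (hd : 0 < d) (hd₀ : d < 1 / 4) :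
    d ^ β ≤ 1 / 2 :=
  calc d ^ β ≤ d ^ (1 / 2 : ℝ) := rpow_le_rpow_of_exponent_ge hd (by linarith) hβ.le
    _ = √d := (sqrt_eq_rpow d).symm
    _ ≤ √(1 / 4) := sqrt_le_sqrt hd₀.le
    _ = 1 / 2 := by rw [show (1 : ℝ) / 4 = (1 / 2) ^ 2 by norm_num, sqrt_sq (by norm_num)]

lemma tsum_neg_mul_logb_eq {ι : Type*} (p : ι → ℝ) :
    ∑' i, -(p i * logb 2 (p i)) = (∑' i, negMulLog (p i)) / log 2 := by
  rw [← tsum_div_const]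
  exact tsum_congr fun i => by rw [logb, negMulLog]; ring

/-- There exist `d₀ > 0` and `κ' < ∞` such that for every `β > 1/2` and `0 < d < d₀`:
if a pmf `p` on the positive integers has finite mean `μ` and Shannon entropy
(in bits) at least `(1 - d^β)·μ`, then `∑_{l≥1} |p(l) - 2^{-l}| ≤ κ'·d^(β/2)`. -/
theorem stmt_2 :
    ∃ d₀ : ℝ, 0 < d₀ ∧ ∃ κ' : ℝ,
      ∀ β : ℝ, 1 / 2 < β →
        ∀ d : ℝ, 0 < d → d < d₀ →
          ∀ p : ℕ+ → ℝ, (∀ l, 0 ≤ p l) → (∑' l : ℕ+, p l = 1) →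
            (Summable fun l : ℕ+ => (l : ℝ) * p l) →
            (1 - d ^ β) * (∑' l : ℕ+, (l : ℝ) * p l) ≤
                (∑' l : ℕ+, -(p l * Real.logb 2 (p l))) →
              (∑' l : ℕ+, |p l - (2 : ℝ) ^ (-((l : ℕ) : ℤ))|) ≤ κ' * d ^ (β / 2) := by
  refine ⟨1 / 4, by norm_num, 2 * ∑' l : ℕ+, ((1 / 2 : ℝ) ^ (1 / 4 : ℝ)) ^ (l : ℕ), ?_⟩
  intro β hβ d hd hd₀ p hp0 hp1 hμ hH
  set μ := ∑' l : ℕ+, (l : ℝ) * p l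
  set ε := d ^ (β / 2)
  have hε : 0 < ε := rpow_pos_of_pos hd _
  have hεD : d ^ β = ε ^ 2 := by rw [← rpow_natCast, ← rpow_mul hd.le]; norm_num
  have hD := rpow_le_half_of_lt_quarter hβ hd hd₀
  have hlog2 : 0 < log 2 := log_pos one_lt_two
  have hμ0 : 0 ≤ μ := tsum_nonneg fun l => mul_nonneg (Nat.cast_nonneg _) (hp0 l)
  rw [tsum_neg_mul_logb_eq, le_div_iff₀ hlog2] at hH
  have hμS := log_two_mul_tsum_coe_mul_le hp0 hp1 hμ
    (by nlinarith [mul_le_mul_of_nonneg_right hD (mul_nonneg hμ0 hlog2.le)])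
  have hhell := tsum_sq_sqrt_sub_sqrt_half_pow_le hp0 hp1 hμ
  have hL1 := tsum_abs_sub_le hp0 (q := fun l : ℕ+ => (1 / 2 : ℝ) ^ (l : ℕ))
    (fun l => by positivity) (summable_of_summable_coe_mul hp0 hμ)
    (summable_geometric_pnat (by norm_num) (by norm_num)) hε
  rw [hp1, tsum_geometric_two_pnat, one_add_one_eq_two] at hL1
  simp_rw [zpow_neg, zpow_natCast, ← inv_pow, ← one_div]
  calc _ ≤ _ := hL1
    _ ≤ log 2 * ε ^ 2 * μ / (2 * ε) + ε * 2 := by gcongr; rw [← hεD]; linarith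
    _ = (log 2 * μ / 2 + 2) * ε := by field_simp
    _ ≤ _ := by nlinarith
end

section
/- There exists d₀ > 0 such that the following holds for every real β > 1/2 and every 0 < d < d₀: let ℓ = ⌊2β·log₂(1/d)⌋; if p is a probability mass function on the positive integers with finite mean μ and Shannon entropy H(p) ≥ (1 − d^β)·μ, then ∑_{l≥ℓ} l·p(l) ≤ 20·d^β. -/
/-!
Gibbs' inequality in Kraft form: if `∑ 2^(-g l) ≤ 1`, then `H(p) ≤ ∑ p l · g l`. With
`ε = d^β` take `g l = 4ε + (1 - ε) l - (1/4 - ε) l · [ℓ ≤ l]`; then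
`∑ p g = 4ε + (1 - ε) μ - (1/4 - ε) T`, where `T` is the tail sum, so the hypothesis
`H(p) ≥ (1 - ε) μ` gives `(1/4 - ε) T ≤ 4ε`, the mean cancelling. The Kraft sum is at most
`2^(-4ε) / (2^(1-ε) - 1) + ∑_{l ≥ ℓ} 2^(-3l/4)`; the first term is about `1 - 2ε log 2`,
and the second is `O(ε^(3/2))` because `2^(-ℓ) < 2ε²`.
-/

open Real

theorem neg_mul_logb_le_mul_add_rpow_sub (g : ℝ) {x : ℝ} (hx : 0 ≤ x) :
    -(x * logb 2 x) ≤ x * g + ((2 : ℝ) ^ (-g) - x) / log 2 := by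
  rcases hx.eq_or_lt with rfl | hx
  · simp only [zero_mul, neg_zero, zero_add, sub_zero]; positivity
  have hlog : log ((2 : ℝ) ^ (-g) / x) ≤ (2 : ℝ) ^ (-g) / x - 1 :=
    log_le_sub_one_of_pos (by positivity)
  rw [log_div (by positivity) hx.ne', log_rpow two_pos] at hlog
  have hgap : x * g + ((2 : ℝ) ^ (-g) - x) / log 2 - -(x * logb 2 x)
      = x * ((2 : ℝ) ^ (-g) / x - 1 - (-g * log 2 - log x)) / log 2 := by
    rw [logb]; field_simp; ring
  have : 0 ≤ x * ((2 : ℝ) ^ (-g) / x - 1 - (-g * log 2 - log x)) / log 2 :=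
    div_nonneg (mul_nonneg hx.le (by linarith)) (log_pos one_lt_two).le
  linarith

theorem tsum_neg_mul_logb_le_of_kraft {α : Type*} {p g : α → ℝ} (hp0 : ∀ a, 0 ≤ p a)
    (hp1 : ∑' a, p a = 1) (hkraft : Summable fun a => (2 : ℝ) ^ (-g a))
    (hkraft1 : ∑' a, (2 : ℝ) ^ (-g a) ≤ 1) (hpg : Summable fun a => p a * g a) :
    ∑' a, -(p a * logb 2 (p a)) ≤ ∑' a, p a * g a := by
  have hp : Summable p := by
    by_contra h
    simp [tsum_eq_zero_of_not_summable h] at hp1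
  have hbound := hpg.add ((hkraft.sub hp).div_const (log 2))
  have hle a := neg_mul_logb_le_mul_add_rpow_sub (g a) (hp0 a)
  have hH : Summable fun a => -(p a * logb 2 (p a)) := by
    refine hbound.of_nonneg_of_le (fun a => ?_) hle
    have hp_le : p a ≤ 1 := hp1 ▸ hp.le_tsum a fun b _ => hp0 b
    exact neg_nonneg.2 <|
      mul_nonpos_of_nonneg_of_nonpos (hp0 a) (logb_nonpos one_lt_two (hp0 a) hp_le)
  calc ∑' a, -(p a * logb 2 (p a))
      ≤ ∑' a, (p a * g a + ((2 : ℝ) ^ (-g a) - p a) / log 2) := hH.tsum_le_tsum hle hbound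
    _ = ∑' a, p a * g a + (∑' a, (2 : ℝ) ^ (-g a) - 1) / log 2 := by
        rw [hpg.tsum_add ((hkraft.sub hp).div_const _), tsum_div_const, hkraft.tsum_sub hp, hp1]
    _ ≤ ∑' a, p a * g a :=
        add_le_of_nonpos_right <|
          div_nonpos_of_nonpos_of_nonneg (by linarith) (log_pos one_lt_two).le

theorem tsum_pnat_geometric {r : ℝ} (h₀ : 0 ≤ r) (h₁ : r < 1) :
    ∑' l : ℕ+, r ^ (l : ℕ) = r / (1 - r) := by
  rw [tsum_pnat_eq_tsum_succ (f := fun n => r ^ n)]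
  simp only [pow_succ']
  rw [tsum_mul_left, tsum_geometric_of_lt_one h₀ h₁, div_eq_mul_inv]

theorem summable_pnat_geometric {r : ℝ} (h₀ : 0 ≤ r) (h₁ : r < 1) :
    Summable fun l : ℕ+ => r ^ (l : ℕ) :=
  (summable_geometric_of_lt_one h₀ h₁).comp_injective PNat.coe_injective

theorem summable_pnat_geometric_tail {s : ℝ} (h₀ : 0 ≤ s) (h₁ : s < 1) (L : ℕ) :
    Summable fun l : ℕ+ => if L ≤ (l : ℕ) then s ^ (l : ℕ) else 0 :=
  (summable_pnat_geometric h₀ h₁).of_nonneg_of_le (fun l => by split_ifs <;> positivity)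
    fun l => by split_ifs <;> simp [pow_nonneg h₀]

theorem tsum_pnat_geometric_tail_le {s : ℝ} (h₀ : 0 ≤ s) (h₁ : s < 1) (L : ℕ) :
    ∑' l : ℕ+, (if L ≤ (l : ℕ) then s ^ (l : ℕ) else 0) ≤ s ^ L / (1 - s) := by
  set f : ℕ → ℝ := fun n => if L ≤ n then s ^ n else 0
  have hf0 n : 0 ≤ f n := by simp only [f]; split_ifs <;> positivity
  have hfs : Summable f :=
    (summable_geometric_of_lt_one h₀ h₁).of_nonneg_of_le hf0 fun n => by
      simp only [f]; split_ifs <;> simp [pow_nonneg h₀]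
  calc ∑' l : ℕ+, f l ≤ ∑' n, f n := tsum_comp_le_tsum_of_inj hfs hf0 PNat.coe_injective
    _ = ∑' i, f (i + L) := by
        rw [← hfs.sum_add_tsum_nat_add L, Finset.sum_eq_zero fun i hi => if_neg
          (by simpa using Finset.mem_range.1 hi), zero_add]
    _ = s ^ L / (1 - s) := by
        simp only [f, le_add_iff_nonneg_left, zero_le, if_true, pow_add]
        rw [tsum_mul_right, tsum_geometric_of_lt_one h₀ h₁, div_eq_mul_inv, mul_comm]

def discountedLength (c ε b : ℝ) (L : ℕ) (l : ℕ+) : ℝ :=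
  c + (1 - ε) * l - b * if L ≤ (l : ℕ) then (l : ℝ) else 0

theorem mul_tsum_tail_le_of_entropy_ge {p : ℕ+ → ℝ} (hp0 : ∀ l, 0 ≤ p l)
    (hp1 : ∑' l, p l = 1) (hμ : Summable fun l : ℕ+ => (l : ℝ) * p l) {c ε b : ℝ}
    {L : ℕ}
    (hH : (1 - ε) * ∑' l : ℕ+, (l : ℝ) * p l ≤ ∑' l : ℕ+, -(p l * logb 2 (p l)))
    (hkraft : Summable fun l => (2 : ℝ) ^ (-discountedLength c ε b L l))
    (hkraft1 : ∑' l, (2 : ℝ) ^ (-discountedLength c ε b L l) ≤ 1) :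
    b * ∑' l : ℕ+, (if L ≤ (l : ℕ) then (l : ℝ) * p l else 0) ≤ c := by
  have hp : Summable p :=
    hμ.of_nonneg_of_le hp0 fun l => le_mul_of_one_le_left (hp0 l) (mod_cast l.pos)
  have htail : Summable fun l : ℕ+ => if L ≤ (l : ℕ) then (l : ℝ) * p l else 0 :=
    hμ.of_nonneg_of_le (fun l => by have := hp0 l; split_ifs <;> positivity)
      fun l => by have := hp0 l; split_ifs <;> simp [this]
  have hsplit : (fun l => p l * discountedLength c ε b L l) = fun l =>
      c * p l + (1 - ε) * ((l : ℝ) * p l) -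
        b * (if L ≤ (l : ℕ) then (l : ℝ) * p l else 0) := by
    ext l; simp only [discountedLength]; split_ifs <;> ring
  have hhead := (hp.mul_left c).add (hμ.mul_left (1 - ε))
  have hgibbs := tsum_neg_mul_logb_le_of_kraft hp0 hp1 hkraft hkraft1
    (hsplit ▸ hhead.sub (htail.mul_left b))
  rw [hsplit, hhead.tsum_sub (htail.mul_left b), (hp.mul_left c).tsum_add (hμ.mul_left _),
    tsum_mul_left, tsum_mul_left, tsum_mul_left, hp1] at hgibbs
  linarith

theorem rpow_neg_discountedLength_le {ε : ℝ} (hε : 0 ≤ ε) (L : ℕ) (l : ℕ+) :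
    (2 : ℝ) ^ (-discountedLength (4 * ε) ε (1 / 4 - ε) L l) ≤
      (2 : ℝ) ^ (-(4 * ε)) * ((2 : ℝ) ^ (ε - 1)) ^ (l : ℕ) +
        if L ≤ (l : ℕ) then ((2 : ℝ) ^ (-(3 / 4) : ℝ)) ^ (l : ℕ) else 0 := by
  have hsplit (a : ℝ) :
      (2 : ℝ) ^ (-(4 * ε + a * l)) = 2 ^ (-(4 * ε)) * ((2 : ℝ) ^ (-a)) ^ (l : ℕ) := by
    rw [← rpow_natCast, ← rpow_mul two_pos.le, ← rpow_add two_pos]; ring_nf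
  simp only [discountedLength]
  split_ifs
  · have hdiscount : 4 * ε + (1 - ε) * l - (1 / 4 - ε) * l = 4 * ε + 3 / 4 * l := by ring
    have hc : (2 : ℝ) ^ (-(4 * ε)) ≤ 1 :=
      rpow_le_one_of_one_le_of_nonpos one_le_two (by linarith)
    rw [hdiscount, hsplit]
    exact (mul_le_of_le_one_left (by positivity) hc).trans (le_add_of_nonneg_left (by positivity))
  · rw [mul_zero, sub_zero, hsplit, add_zero, neg_sub]

theorem rpow_neg_four_mul_mul_div_one_sub_le {ε : ℝ} (h₀ : 0 ≤ ε) (h₁ : ε ≤ 1 / 1000) :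
    (2 : ℝ) ^ (-(4 * ε)) * ((2 : ℝ) ^ (ε - 1) / (1 - (2 : ℝ) ^ (ε - 1))) ≤
      1 - ε / 4 := by
  have hy_ge : 1 + ε * log 2 ≤ (2 : ℝ) ^ ε := by
    rw [rpow_def_of_pos two_pos]; linarith [add_one_le_exp (log 2 * ε)]
  set y := (2 : ℝ) ^ ε
  have hy_le : y ≤ 1 + ε := by
    simpa [one_add_one_eq_two] using
      rpow_one_add_le_one_add_mul_self (s := 1) (by norm_num) h₀ (by linarith)
  have hc : (2 : ℝ) ^ (-(4 * ε)) = (y ^ 4)⁻¹ := by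
    rw [rpow_neg two_pos.le, ← rpow_natCast, ← rpow_mul two_pos.le, mul_comm]; norm_num
  have hr : (2 : ℝ) ^ (ε - 1) = y / 2 := by rw [rpow_sub two_pos, rpow_one]
  have hlog2 := log_two_gt_d9
  have hδ : 0.69 * ε ≤ y - 1 := by nlinarith
  have hδ₀ : 0 ≤ y - 1 := by linarith
  have hy4 : 1 + 4 * (y - 1) ≤ y ^ 4 := one_add_mul_sub_le_pow (by linarith) 4
  -- to first order this reads `ε / 4 ≤ 2 (y - 1)`, and `y - 1 ≥ 0.69 ε`
  have hpoly : y ≤ (1 + 4 * (y - 1)) * (1 - ε / 4) * (2 - y) := by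
    nlinarith [mul_nonneg h₀ hδ₀, mul_nonneg (mul_nonneg h₀ hδ₀) hδ₀]
  rw [hc, hr, inv_mul_le_iff₀ (by positivity), div_le_iff₀ (by linarith)]
  nlinarith [mul_le_mul_of_nonneg_right hy4 (show 0 ≤ (1 - ε / 4) * (2 - y) by nlinarith)]

theorem rpow_neg_three_div_four_pow_div_le {ε : ℝ} (h₀ : 0 ≤ ε) (h₁ : ε ≤ 1 / 1000)
    {L : ℕ} (hL : 1 ≤ 2 * ε ^ 2 * 2 ^ L) :
    ((2 : ℝ) ^ (-(3 / 4) : ℝ)) ^ L / (1 - (2 : ℝ) ^ (-(3 / 4) : ℝ)) ≤ ε / 4 := by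
  set s := (2 : ℝ) ^ (-(3 / 4) : ℝ)
  have hs0 : 0 < s := by positivity
  have hs4 : s ^ 4 = 1 / 8 := by
    rw [← rpow_natCast, ← rpow_mul two_pos.le]; norm_num
  have hs : s ≤ 0.6 := by
    by_contra! h
    have := pow_lt_pow_left₀ h (by norm_num) (n := 4) (by norm_num)
    rw [hs4] at this; norm_num at this
  set X := (2 : ℝ) ^ L
  have hε2 : ε ^ 2 ≤ 1 / 1000000 := by nlinarith
  have hX : 500000 ≤ X := by
    nlinarith [mul_le_mul_of_nonneg_right hε2 (by positivity : (0 : ℝ) ≤ X)]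
  have hsL4 : (s ^ L) ^ 4 = (X ^ 3)⁻¹ := by
    rw [← pow_mul, mul_comm, pow_mul, hs4, ← pow_mul, mul_comm, pow_mul, one_div, inv_pow]
    norm_num
  have hsL : s ^ L ≤ ε / 10 := by
    rw [← pow_le_pow_iff_left₀ (by positivity) (by positivity) four_ne_zero, hsL4,
      inv_le_iff_one_le_mul₀ (by positivity)]
    nlinarith [mul_le_mul_of_nonneg_left hX (sq_nonneg (ε ^ 2 * X))]
  rw [div_le_iff₀ (by linarith)]
  nlinarith

theorem summable_rpow_neg_discountedLength {ε : ℝ} (h₀ : 0 ≤ ε) (h₁ : ε < 1) (L : ℕ) :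
    Summable fun l => (2 : ℝ) ^ (-discountedLength (4 * ε) ε (1 / 4 - ε) L l) :=
  (((summable_pnat_geometric (by positivity) (rpow_lt_one_of_one_lt_of_neg one_lt_two
    (by linarith))).mul_left _).add (summable_pnat_geometric_tail (by positivity)
      (rpow_lt_one_of_one_lt_of_neg one_lt_two (by norm_num)) L)).of_nonneg_of_le
    (fun _ => by positivity) (rpow_neg_discountedLength_le h₀ L)

theorem tsum_rpow_neg_discountedLength_le_one {ε : ℝ} (h₀ : 0 ≤ ε) (h₁ : ε ≤ 1 / 1000)
    {L : ℕ} (hL : 1 ≤ 2 * ε ^ 2 * 2 ^ L) :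
    ∑' l, (2 : ℝ) ^ (-discountedLength (4 * ε) ε (1 / 4 - ε) L l) ≤ 1 := by
  have hr := rpow_lt_one_of_one_lt_of_neg one_lt_two (show ε - 1 < 0 by linarith)
  have hs := rpow_lt_one_of_one_lt_of_neg one_lt_two (show (-(3 / 4) : ℝ) < 0 by norm_num)
  have hhead := (summable_pnat_geometric (by positivity) hr).mul_left ((2 : ℝ) ^ (-(4 * ε)))
  have htail := summable_pnat_geometric_tail (by positivity) hs L
  calc ∑' l, (2 : ℝ) ^ (-discountedLength (4 * ε) ε (1 / 4 - ε) L l)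
      ≤ ∑' l : ℕ+, ((2 : ℝ) ^ (-(4 * ε)) * ((2 : ℝ) ^ (ε - 1)) ^ (l : ℕ) +
          if L ≤ (l : ℕ) then ((2 : ℝ) ^ (-(3 / 4) : ℝ)) ^ (l : ℕ) else 0) :=
        (summable_rpow_neg_discountedLength h₀ (by linarith) L).tsum_le_tsum
          (rpow_neg_discountedLength_le h₀ L) (hhead.add htail)
    _ ≤ (1 - ε / 4) + ε / 4 := by
        rw [hhead.tsum_add htail, tsum_mul_left, tsum_pnat_geometric (by positivity) hr]
        exact add_le_add (rpow_neg_four_mul_mul_div_one_sub_le h₀ h₁) <|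
          (tsum_pnat_geometric_tail_le (by positivity) hs L).trans
            (rpow_neg_three_div_four_pow_div_le h₀ h₁ hL)
    _ = 1 := by ring

theorem one_le_two_mul_rpow_sq_mul_two_pow_floor {d : ℝ} (hd : 0 < d) (β : ℝ) :
    1 ≤ 2 * (d ^ β) ^ 2 * 2 ^ ⌊2 * β * logb 2 (1 / d)⌋₊ := by
  have hlog2 := log_pos one_lt_two
  have hfloor := mul_lt_mul_of_pos_right (Nat.sub_one_lt_floor (2 * β * logb 2 (1 / d))) hlog2
  have hexp : (2 * β * logb 2 (1 / d) - 1) * log 2 = -(2 * β * log d) - log 2 := by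
    rw [logb, one_div, log_inv]; field_simp
  rw [← log_nonneg_iff (by positivity), log_mul (by positivity) (by positivity),
    log_mul (by norm_num) (by positivity), log_pow, log_pow, log_rpow hd]
  push_cast
  linarith

/-- There exists `d₀ > 0` such that for every `β > 1/2` and `0 < d < d₀`, with
`ℓ = ⌊2β·log₂(1/d)⌋`: if a pmf `p` on the positive integers has finite mean `μ`
and Shannon entropy (in bits) at least `(1 - d^β)·μ`, then
`∑_{l ≥ ℓ} l·p(l) ≤ 20·d^β`. -/
theorem stmt_3 :
    ∃ d₀ : ℝ, 0 < d₀ ∧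
      ∀ β : ℝ, 1 / 2 < β →
        ∀ d : ℝ, 0 < d → d < d₀ →
          ∀ p : ℕ+ → ℝ, (∀ l, 0 ≤ p l) → (∑' l : ℕ+, p l = 1) →
            (Summable fun l : ℕ+ => (l : ℝ) * p l) →
            (1 - d ^ β) * (∑' l : ℕ+, (l : ℝ) * p l) ≤
                (∑' l : ℕ+, -(p l * Real.logb 2 (p l))) →
              (∑' l : ℕ+,
                  if Nat.floor (2 * β * Real.logb 2 (1 / d)) ≤ (l : ℕ) then
                    (l : ℝ) * p l
                  else 0) ≤ 20 * d ^ β := by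
  refine ⟨1 / 1000000, by norm_num, fun β hβ d hd₀ hd p hp0 hp1 hμ hH => ?_⟩
  set ε := d ^ β
  have hε₀ : 0 < ε := rpow_pos_of_pos hd₀ β
  have hε : ε ≤ 1 / 1000 := by
    have hsq : ε ^ 2 ≤ d := by
      rw [← rpow_natCast, ← rpow_mul hd₀.le]
      simpa using rpow_le_rpow_of_exponent_ge hd₀ (by linarith) (show 1 ≤ β * (2 : ℕ) by
        push_cast; linarith)
    nlinarith
  have hT := mul_tsum_tail_le_of_entropy_ge hp0 hp1 hμ hH
    (summable_rpow_neg_discountedLength hε₀.le (by linarith) _)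
    (tsum_rpow_neg_discountedLength_le_one hε₀.le hε
      (one_le_two_mul_rpow_sq_mul_two_pow_floor hd₀ β))
  have hT₀ : 0 ≤ ∑' l : ℕ+,
      if ⌊2 * β * logb 2 (1 / d)⌋₊ ≤ (l : ℕ) then (l : ℝ) * p l else 0 :=
    tsum_nonneg fun l => by have := hp0 l; split_ifs <;> positivity
  nlinarith
end

section
/- There exist d₀ > 0 and a constant κ' < ∞ such that the following holds for every positive integer k, every real β > 1/2, and every 0 < d < d₀: if q is a probability mass function on k-tuples of positive integers all of whose one-dimensional coordinate marginals equal a common pmf p on the positive integers with finite mean μ, and the joint Shannon entropy satisfies H(q) ≥ (1 − d^β)·k·μ, then ∑_{(l₁,…,l_k)} |q(l₁,…,l_k) − 2^{−(l₁+⋯+l_k)}| ≤ κ'·√k·d^{β/2}. -/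
/-!
Let `m(l₁,…,l_k) = 2^{-∑ lᵢ}`, the product of `k` geometric(1/2) laws on `ℕ+`. Since `log m`
is a sum of coordinate functions, the cross entropy of `q` against `m` only sees the marginals:
it is `k μ log 2`, so `D(q ‖ m) = (k μ - H(q)) log 2 ≤ ε k μ log 2` with `ε = d^β`. Comparing
`q` instead with the product of geometric(3/4) laws, Gibbs' inequality gives
`H(q) ≤ k (2 + (μ - 1) log₂ (4/3))`, which is incompatible with `H(q) ≥ (3/4) k μ` unless
`μ log 2 ≤ 4`; hence `D(q ‖ m) ≤ 4 k ε`. A Pinsker-type bound through the Hellinger distance,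
`|a - b| ≤ c (a + b) + (√a - √b)² / (2c)` summed with `c = √(k ε)`, turns this into
`∑ |q - m| ≤ 4 √(k ε) = 4 √k d^{β/2}`.
-/

open Real

section Pointwise

variable {a b : ℝ}

lemma sq_sqrt_sub_sqrt_le (ha : 0 ≤ a) (hb : 0 < b) :
    (√a - √b) ^ 2 ≤ a * log a - a * log b - a + b := by
  rcases ha.eq_or_lt with rfl | ha
  · simp [sq_sqrt hb.le]
  set x := √a
  set y := √b
  have hx : 0 < x := sqrt_pos.mpr ha
  have hy : 0 < y := sqrt_pos.mpr hb
  have key : x ^ 2 - x * y ≤ x ^ 2 * (log x - log y) := by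
    have h := one_sub_inv_le_log_of_pos (div_pos hx hy)
    rw [inv_div, log_div hx.ne' hy.ne'] at h
    have := mul_le_mul_of_nonneg_left h (sq_nonneg x)
    rwa [mul_sub, mul_one, sq, mul_assoc, mul_div_cancel₀ _ hx.ne', ← sq] at this
  rw [← sq_sqrt ha.le, ← sq_sqrt hb.le, log_pow, log_pow]
  push_cast
  nlinarith [key]

lemma abs_sub_le_mul_add_add_sq_sqrt_sub_sqrt (ha : 0 ≤ a) (hb : 0 ≤ b) {c : ℝ} (hc : 0 < c) :
    |a - b| ≤ c * (a + b) + (√a - √b) ^ 2 / (2 * c) := by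
  set x := √a
  set y := √b
  have hx : 0 ≤ x := sqrt_nonneg a
  have hy : 0 ≤ y := sqrt_nonneg b
  have hab : |a - b| = |x - y| * (x + y) := by
    rw [← sq_sqrt ha, ← sq_sqrt hb, sq_sub_sq, abs_mul, abs_of_nonneg (add_nonneg hx hy), mul_comm]
  have amgm : c * (x + y) ^ 2 / 2 + (x - y) ^ 2 / (2 * c) - |x - y| * (x + y)
      = (c * (x + y) - |x - y|) ^ 2 / (2 * c) := by
    rw [← sq_abs (x - y)]
    field_simp
    ring
  have hsq : (x + y) ^ 2 / 2 ≤ a + b := by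
    rw [← sq_sqrt ha, ← sq_sqrt hb]
    nlinarith [sq_nonneg (x - y)]
  rw [hab]
  nlinarith [mul_le_mul_of_nonneg_left hsq hc.le,
    div_nonneg (sq_nonneg (c * (x + y) - |x - y|)) (by positivity : (0 : ℝ) ≤ 2 * c)]

end Pointwise

section RelativeEntropy

variable {ι : Type*} {q r : ι → ℝ} {N R : ℝ}

lemma le_of_hasSum_mul_log (hq0 : ∀ t, 0 ≤ q t) (hr0 : ∀ t, 0 < r t) (hq : HasSum q 1)
    (hr : HasSum r 1) (hN : HasSum (fun t => q t * log (q t)) N)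
    (hR : HasSum (fun t => q t * log (r t)) R) : R ≤ N := by
  have := hasSum_le (fun t => (sq_nonneg _).trans (sq_sqrt_sub_sqrt_le (hq0 t) (hr0 t)))
    hasSum_zero (((hN.sub hR).sub hq).add hr)
  linarith

lemma tsum_abs_sub_le_of_hasSum_mul_log (hq0 : ∀ t, 0 ≤ q t) (hr0 : ∀ t, 0 < r t)
    (hq : HasSum q 1) (hr : HasSum r 1) (hN : HasSum (fun t => q t * log (q t)) N)
    (hR : HasSum (fun t => q t * log (r t)) R) {c : ℝ} (hc : 0 < c) :
    ∑' t, |q t - r t| ≤ 2 * c + (N - R) / (2 * c) := by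
  have hbound := ((hq.add hr).mul_left c).add ((((hN.sub hR).sub hq).add hr).div_const (2 * c))
  have := hasSum_le (fun t => (abs_sub_le_mul_add_add_sq_sqrt_sub_sqrt (hq0 t) (hr0 t).le hc).trans
      (by gcongr; exact sq_sqrt_sub_sqrt_le (hq0 t) (hr0 t)))
    (hq.summable.sub hr.summable).abs.hasSum hbound
  refine this.trans_eq ?_
  ring

end RelativeEntropy

lemma hasSum_mul_comp_of_tsum_fiber {α β : Type*} [DecidableEq β] {f : α → ℝ} {g : α → β}
    {w P : β → ℝ} {s : ℝ} (hf0 : ∀ a, 0 ≤ f a) (hf : Summable f) (hw0 : ∀ b, 0 ≤ w b)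
    (hP : ∀ b, ∑' a, (if g a = b then f a else 0) = P b) (hs : HasSum (fun b => w b * P b) s) :
    HasSum (fun a => w (g a) * f a) s := by
  have hfiber (b : β) : HasSum (fun a : g ⁻¹' {b} => w (g a) * f a) (w b * P b) := by
    have h : HasSum (fun a : g ⁻¹' {b} => f a) (P b) := by
      have hind : (fun a => if g a = b then f a else 0) = (g ⁻¹' {b}).indicator f :=
        funext fun a => by by_cases h : g a = b <;> simp [h]
      rw [← hP, hind, ← tsum_subtype]
      exact (hf.subtype _).hasSum
    have hw : (fun a : g ⁻¹' {b} => w (g a) * f a) = fun a : g ⁻¹' {b} => w b * f a :=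
      funext fun a => by rw [show g a = b from a.2]
    exact hw ▸ h.mul_left (w b)
  have hsum : Summable fun x : Σ b, g ⁻¹' {b} => w (g x.2) * f x.2 :=
    (summable_sigma_of_nonneg fun x => mul_nonneg (hw0 _) (hf0 _)).mpr
      ⟨fun b => (hfiber b).summable, by simpa only [(hfiber _).tsum_eq] using hs.summable⟩
  rw [← (Equiv.sigmaFiberEquiv g).hasSum_iff, ← (hsum.hasSum.sigma hfiber).unique hs]
  exact hsum.hasSum

lemma hasSum_mul_sum_coord {k : ℕ} {q : (Fin k → ℕ+) → ℝ} {p : ℕ+ → ℝ} {μ : ℝ}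
    (hq0 : ∀ t, 0 ≤ q t) (hq : Summable q)
    (hmar : ∀ i a, ∑' t : Fin k → ℕ+, (if t i = a then q t else 0) = p a)
    (hμ : HasSum (fun l : ℕ+ => (l : ℝ) * p l) μ) :
    HasSum (fun t => q t * ∑ i, (t i : ℝ)) (k * μ) := by
  have hcoord (i : Fin k) : HasSum (fun t : Fin k → ℕ+ => (t i : ℝ) * q t) μ :=
    hasSum_mul_comp_of_tsum_fiber (w := fun l : ℕ+ => (l : ℝ)) hq0 hq
      (fun l => Nat.cast_nonneg _) (hmar i) hμ
  have h := hasSum_sum (s := Finset.univ) fun i _ => hcoord i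
  rw [Finset.sum_const, Finset.card_univ, Fintype.card_fin, nsmul_eq_mul] at h
  simpa only [Finset.mul_sum, mul_comm] using h

lemma hasSum_prod_of_hasSum {α : Type*} {f : α → ℝ} {s : ℝ} (hf0 : ∀ a, 0 ≤ f a)
    (hf : HasSum f s) (k : ℕ) : HasSum (fun t : Fin k → α => ∏ i, f (t i)) (s ^ k) := by
  induction k with
  | zero => simp
  | succ k ih =>
    have hcons (x : α × (Fin k → α)) :
        ∏ i, f (Fin.consEquiv (fun _ => α) x i) = f x.1 * ∏ i, f (x.2 i) := by
      simp [Fin.prod_univ_succ, Fin.consEquiv]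
    rw [← (Fin.consEquiv fun _ => α).hasSum_iff, Function.comp_def]
    simp only [hcons, pow_succ']
    have hsum : Summable fun x : α × (Fin k → α) => f x.1 * ∏ i, f (x.2 i) :=
      hf.summable.mul_of_nonneg (g := fun t : Fin k → α => ∏ i, f (t i)) ih.summable hf0
        fun t => Finset.prod_nonneg fun i _ => hf0 (t i)
    exact hf.mul (g := fun t : Fin k → α => ∏ i, f (t i)) ih hsum

def geomPNat (θ : ℝ) (l : ℕ+) : ℝ := (1 - θ) * θ ^ ((l : ℕ) - 1)

section Geometric

variable {θ : ℝ}

lemma geomPNat_pos (h0 : 0 < θ) (h1 : θ < 1) (l : ℕ+) : 0 < geomPNat θ l :=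
  mul_pos (sub_pos.mpr h1) (pow_pos h0 _)

lemma hasSum_geomPNat (h0 : 0 ≤ θ) (h1 : θ < 1) : HasSum (geomPNat θ) 1 := by
  rw [← Equiv.pnatEquivNat.symm.hasSum_iff]
  have := (hasSum_geometric_of_lt_one h0 h1).mul_left (1 - θ)
  rw [mul_inv_cancel₀ (sub_pos.mpr h1).ne'] at this
  simp only [Equiv.pnatEquivNat, Equiv.symm_mk, Equiv.coe_fn_mk, Function.comp_def, geomPNat,
    Nat.succPNat_coe]
  exact this

lemma log_geomPNat (h0 : 0 < θ) (h1 : θ < 1) (l : ℕ+) :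
    log (geomPNat θ l) = log (1 - θ) + ((l : ℝ) - 1) * log θ := by
  rw [geomPNat, log_mul (sub_pos.mpr h1).ne' (pow_pos h0 _).ne', log_pow,
    Nat.cast_pred l.pos]

end Geometric

section ProductGeometric

variable {k : ℕ} {θ : ℝ}

lemma log_prod_geomPNat (h0 : 0 < θ) (h1 : θ < 1) (t : Fin k → ℕ+) :
    log (∏ i, geomPNat θ (t i)) = k * log (1 - θ) + (∑ i, (t i : ℝ) - k) * log θ := by
  rw [log_prod fun i _ => (geomPNat_pos h0 h1 (t i)).ne']
  simp only [log_geomPNat h0 h1, Finset.sum_add_distrib, ← Finset.sum_mul, Finset.sum_sub_distrib,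
    Finset.sum_const, Finset.card_univ, Fintype.card_fin, nsmul_eq_mul, mul_one]

lemma prod_geomPNat_half (t : Fin k → ℕ+) :
    ∏ i, geomPNat (1 / 2) (t i) = (2 : ℝ) ^ (-((∑ i, (t i : ℕ) : ℕ) : ℤ)) := by
  have h (l : ℕ+) : geomPNat (1 / 2) l = (2 : ℝ)⁻¹ ^ (l : ℕ) := by
    obtain ⟨n, hn⟩ : ∃ n, (l : ℕ) = n + 1 := ⟨_, (Nat.succ_pred_eq_of_pos l.pos).symm⟩
    rw [geomPNat, hn, add_tsub_cancel_right, pow_succ]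
    norm_num
    ring
  rw [zpow_neg, zpow_natCast, ← inv_pow, ← Finset.prod_pow_eq_pow_sum]
  exact Finset.prod_congr rfl fun i _ => h (t i)

lemma hasSum_prod_geomPNat (h0 : 0 < θ) (h1 : θ < 1) :
    HasSum (fun t : Fin k → ℕ+ => ∏ i, geomPNat θ (t i)) 1 := by
  simpa using
    hasSum_prod_of_hasSum (fun l => (geomPNat_pos h0 h1 l).le) (hasSum_geomPNat h0.le h1) k

lemma hasSum_mul_log_prod_geomPNat {q : (Fin k → ℕ+) → ℝ} {μ : ℝ} (h0 : 0 < θ) (h1 : θ < 1)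
    (hq : HasSum q 1) (hS : HasSum (fun t => q t * ∑ i, (t i : ℝ)) (k * μ)) :
    HasSum (fun t => q t * log (∏ i, geomPNat θ (t i))) (k * (log (1 - θ) + (μ - 1) * log θ)) := by
  have hlog : (fun t => q t * log (∏ i, geomPNat θ (t i))) =
      fun t => log θ * (q t * ∑ i, (t i : ℝ)) + k * (log (1 - θ) - log θ) * q t :=
    funext fun t => by rw [log_prod_geomPNat h0 h1]; ring
  rw [hlog, show k * (log (1 - θ) + (μ - 1) * log θ)
    = log θ * (k * μ) + k * (log (1 - θ) - log θ) * 1 by ring]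
  exact (hS.mul_left _).add (hq.mul_left _)

end ProductGeometric

section NearMaximalEntropy

variable {k : ℕ} {q : (Fin k → ℕ+) → ℝ} {μ : ℝ}

lemma one_le_of_hasSum_mul_sum (hk : 0 < k) (hq0 : ∀ t, 0 ≤ q t) (hq : HasSum q 1)
    (hS : HasSum (fun t => q t * ∑ i, (t i : ℝ)) (k * μ)) : 1 ≤ μ := by
  have hle (t : Fin k → ℕ+) : q t * k ≤ q t * ∑ i, (t i : ℝ) := by
    refine mul_le_mul_of_nonneg_left ?_ (hq0 t)
    simpa using Finset.card_nsmul_le_sum Finset.univ (fun i => (t i : ℝ)) 1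
      fun i _ => Nat.one_le_cast.mpr (t i).pos
  have := hasSum_le hle (hq.mul_right (k : ℝ)) hS
  rw [one_mul] at this
  exact le_of_mul_le_mul_left (by linarith) (by exact_mod_cast hk : (0 : ℝ) < k)

lemma log_two_mul_le_four (hk : 0 < k) (hq0 : ∀ t, 0 ≤ q t) (hq : HasSum q 1)
    (hS : HasSum (fun t => q t * ∑ i, (t i : ℝ)) (k * μ)) {N ε : ℝ}
    (hN : HasSum (fun t => q t * log (q t)) N) (hε : ε ≤ 1 / 4)
    (hH : (1 - ε) * (k * μ) * log 2 ≤ -N) : log 2 * μ ≤ 4 := by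
  have hμ := one_le_of_hasSum_mul_sum hk hq0 hq hS
  have hgibbs := le_of_hasSum_mul_log hq0
    (fun t => Finset.prod_pos fun i _ => geomPNat_pos (by norm_num) (by norm_num) (t i))
    hq (hasSum_prod_geomPNat (by norm_num) (by norm_num)) hN
    (hasSum_mul_log_prod_geomPNat (θ := 3 / 4) (by norm_num) (by norm_num) hq hS)
  have hlog4 : log (1 - 3 / 4 : ℝ) = -(2 * log 2) := by
    rw [show (1 - 3 / 4 : ℝ) = (2 ^ 2)⁻¹ by norm_num, log_inv, log_pow]
    push_cast
    ring
  have hlog34 : -(1 / 3) ≤ log (3 / 4 : ℝ) := by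
    have := one_sub_inv_le_log_of_pos (by norm_num : (0 : ℝ) < 3 / 4)
    norm_num at this ⊢
    linarith
  have hper : (1 - ε) * μ * log 2 ≤ 2 * log 2 - (μ - 1) * log (3 / 4) := by
    rw [hlog4] at hgibbs
    refine le_of_mul_le_mul_left ?_ (by exact_mod_cast hk : (0 : ℝ) < k)
    linarith
  have hL0 := log_two_gt_d9
  have hL1 := log_two_lt_d9
  -- with `L = log 2`: `(3/4) μ L ≤ 2 L + (μ - 1) / 3` gives `L μ ≤ 4` as `(3L - 2)(L - 1) ≤ 0`
  nlinarith [mul_le_mul_of_nonneg_right hε (by positivity : 0 ≤ μ * log 2),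
    mul_le_mul_of_nonneg_left hlog34 (by linarith : 0 ≤ μ - 1)]

theorem tsum_abs_sub_prod_geomPNat_half_le {ε : ℝ} (hk : 0 < k)
    (hq0 : ∀ t, 0 ≤ q t) (hq : HasSum q 1) (hS : HasSum (fun t => q t * ∑ i, (t i : ℝ)) (k * μ))
    (hε0 : 0 < ε) (hε : ε ≤ 1 / 4) (hH : (1 - ε) * (k * μ) * log 2 ≤ -∑' t, q t * log (q t)) :
    ∑' t, |q t - ∏ i, geomPNat (1 / 2) (t i)| ≤ 4 * √(k * ε) := by
  have hk' : (0 : ℝ) < k := by exact_mod_cast hk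
  have hμ := one_le_of_hasSum_mul_sum hk hq0 hq hS
  have hN : Summable fun t => q t * log (q t) := by
    by_contra h
    rw [tsum_eq_zero_of_not_summable h, neg_zero] at hH
    have : 0 < (1 - ε) * (k * μ) * log 2 :=
      mul_pos (mul_pos (by linarith) (by positivity)) (log_pos one_lt_two)
    linarith
  have hμL := log_two_mul_le_four hk hq0 hq hS hN.hasSum hε hH
  set c := √(k * ε)
  have hc : 0 < c := sqrt_pos.mpr (by positivity)
  have hc2 : c ^ 2 = k * ε := sq_sqrt (by positivity)
  have hpinsker := tsum_abs_sub_le_of_hasSum_mul_log hq0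
    (fun t => Finset.prod_pos fun i _ => geomPNat_pos (by norm_num) (by norm_num) (t i))
    hq (hasSum_prod_geomPNat (by norm_num) (by norm_num)) hN.hasSum
    (hasSum_mul_log_prod_geomPNat (θ := 1 / 2) (by norm_num) (by norm_num) hq hS) hc
  have hlog : log (1 - 1 / 2 : ℝ) = -log 2 := by
    rw [show (1 - 1 / 2 : ℝ) = 2⁻¹ by norm_num, log_inv]
  have hKL : ∑' t, q t * log (q t) - k * (log (1 - 1 / 2) + (μ - 1) * log (1 / 2)) ≤ 4 * c ^ 2 := by
    rw [hlog, one_div, log_inv, hc2]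
    nlinarith [mul_le_mul_of_nonneg_left hμL (by positivity : 0 ≤ k * ε)]
  calc _ ≤ 2 * c + (4 * c ^ 2) / (2 * c) := hpinsker.trans (by gcongr)
    _ = 4 * c := by field_simp; ring

end NearMaximalEntropy

lemma tsum_neg_mul_logb {ι : Type*} (q : ι → ℝ) (b : ℝ) :
    ∑' t, -(q t * logb b (q t)) = -(∑' t, q t * log (q t)) / log b := by
  rw [← tsum_neg, ← tsum_div_const]
  exact tsum_congr fun t => by rw [logb]; ring

lemma rpow_le_quarter {d β : ℝ} (hd : 0 < d) (hd₀ : d < 1 / 16) (hβ : 1 / 2 < β) :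
    d ^ β ≤ 1 / 4 := by
  calc d ^ β ≤ d ^ (1 / 2 : ℝ) := rpow_le_rpow_of_exponent_ge hd (by linarith) hβ.le
    _ = √d := (sqrt_eq_rpow d).symm
    _ ≤ √(1 / 16) := sqrt_le_sqrt hd₀.le
    _ = 1 / 4 := by rw [show (1 / 16 : ℝ) = (1 / 4) ^ 2 by norm_num, sqrt_sq (by norm_num)]

/-- There exist `d₀ > 0` and `κ' < ∞` such that for every positive integer `k`,
every `β > 1/2` and every `0 < d < d₀`: if `q` is a pmf on `k`-tuples of positive
integers all of whose coordinate marginals equal a common pmf `p` with finite mean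
`μ`, and the joint Shannon entropy (in bits) satisfies `H(q) ≥ (1 - d^β)·k·μ`, then
`∑ |q(l₁,…,l_k) - 2^{-(l₁+⋯+l_k)}| ≤ κ'·√k·d^(β/2)`. -/
theorem stmt_5 :
    ∃ d₀ : ℝ, 0 < d₀ ∧ ∃ κ' : ℝ,
      ∀ k : ℕ, 0 < k →
        ∀ β : ℝ, 1 / 2 < β →
          ∀ d : ℝ, 0 < d → d < d₀ →
            ∀ (q : (Fin k → ℕ+) → ℝ) (p : ℕ+ → ℝ),
              (∀ t, 0 ≤ q t) → (∑' t : Fin k → ℕ+, q t = 1) →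
              (∀ (i : Fin k) (a : ℕ+),
                  (∑' t : Fin k → ℕ+, if t i = a then q t else 0) = p a) →
              (Summable fun l : ℕ+ => (l : ℝ) * p l) →
              (1 - d ^ β) * ((k : ℝ) * ∑' l : ℕ+, (l : ℝ) * p l) ≤
                  (∑' t : Fin k → ℕ+, -(q t * Real.logb 2 (q t))) →
                (∑' t : Fin k → ℕ+,
                    |q t - (2 : ℝ) ^ (-((∑ i, (t i : ℕ) : ℕ) : ℤ))|) ≤
                  κ' * Real.sqrt k * d ^ (β / 2) := by
  refine ⟨1 / 16, by norm_num, 4, fun k hk β hβ d hd hd₀ q p hq0 hq1 hmar hpsum hH => ?_⟩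
  have hq : HasSum q 1 := by
    by_cases h : Summable q
    · exact hq1 ▸ h.hasSum
    · rw [tsum_eq_zero_of_not_summable h] at hq1
      exact absurd hq1 zero_ne_one
  have hS := hasSum_mul_sum_coord hq0 hq.summable hmar hpsum.hasSum
  have hH' : (1 - d ^ β) * (k * ∑' l : ℕ+, (l : ℝ) * p l) * log 2 ≤ -∑' t, q t * log (q t) := by
    rwa [tsum_neg_mul_logb, le_div_iff₀ (log_pos one_lt_two)] at hH
  have h := tsum_abs_sub_prod_geomPNat_half_le hk hq0 hq hS (rpow_pos_of_pos hd β)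
    (rpow_le_quarter hd hd₀ hβ) hH'
  simp_rw [prod_geomPNat_half] at h
  rwa [sqrt_mul (Nat.cast_nonneg k), sqrt_eq_rpow (d ^ β), ← rpow_mul hd.le, ← mul_assoc,
    show β * (1 / 2) = β / 2 by ring] at h
end

section
/- Let m ≥ 1 be an integer, let U, U₁, U₂, …, U_m be random variables on a common probability space taking values in the natural numbers such that each U_i has the same distribution as U, and let f₁, …, f_m : ℕ → [0,∞) be non-decreasing functions. Then E[∏_{i=1}^m f_i(U_i)] ≤ E[∏_{i=1}^m f_i(U)], where the expectations are taken in [0,∞]. -/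
open MeasureTheory
open scoped ENNReal NNReal

/-- Increment sequence of `f : ℕ → ℝ≥0`. -/
noncomputable def stmt6Aux (f : ℕ → ℝ≥0) : ℕ → ℝ≥0
  | 0 => f 0
  | (k + 1) => f (k + 1) - f k

lemma stmt6Aux_sum (f : ℕ → ℝ≥0) (hf : Monotone f) (n : ℕ) :
    ∑ k ∈ Finset.range (n + 1), stmt6Aux f k = f n := by
  induction n with
  | zero => simp [stmt6Aux]
  | succ n ih =>
    rw [Finset.sum_range_succ, ih]
    show f n + (f (n + 1) - f n) = f (n + 1)
    exact add_tsub_cancel_of_le (hf (Nat.le_succ n))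

lemma stmt6_rep (f : ℕ → ℝ≥0) (hf : Monotone f) (n : ℕ) :
    (f n : ℝ≥0∞) = ∑' k : ℕ, (if k ≤ n then (stmt6Aux f k : ℝ≥0∞) else 0) := by
  rw [tsum_eq_sum (s := Finset.range (n + 1)) (by
    intro k hk
    rw [Finset.mem_range, not_lt] at hk
    exact if_neg (by omega))]
  rw [Finset.sum_congr rfl (fun k hk => if_pos (by
    rw [Finset.mem_range] at hk; omega))]
  rw [← ENNReal.coe_finset_sum, stmt6Aux_sum f hf n]

/-- Product over `Fin m` of tsums in `ℝ≥0∞` equals a tsum over the pi type. -/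
lemma stmt6_prod_tsum : ∀ (m : ℕ) (g : Fin m → ℕ → ℝ≥0∞),
    ∏ i, ∑' k, g i k = ∑' k : Fin m → ℕ, ∏ i, g i (k i) := by
  intro m
  induction m with
  | zero =>
    intro g
    rw [tsum_eq_single (fun i => i.elim0) (by
      intro b hb
      exact absurd (funext fun i => i.elim0) hb)]
    simp
  | succ n ih =>
    intro g
    rw [Fin.prod_univ_succ, ih, ← ENNReal.tsum_mul_right]
    rw [tsum_congr (fun k => (ENNReal.tsum_mul_left (a := g 0 k)).symm)]
    rw [← ENNReal.tsum_prod]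
    rw [← (Fin.consEquiv (fun _ : Fin (n + 1) => ℕ)).tsum_eq
      (fun k => ∏ i, g i (k i))]
    refine tsum_congr fun p => ?_
    rw [Fin.prod_univ_succ]
    simp [Fin.consEquiv]

lemma stmt6_term_eq {Ω : Type*} (m : ℕ) (V : Fin m → Ω → ℕ) (k : Fin m → ℕ)
    (c : Fin m → ℝ≥0∞) :
    (fun ω => ∏ i, if k i ≤ V i ω then c i else 0) =
      (⋂ i, V i ⁻¹' {n | k i ≤ n}).indicator (fun _ => ∏ i, c i) := by
  funext ω
  by_cases h : ∀ i, k i ≤ V i ω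
  · rw [Set.indicator_of_mem (by simpa using h)]
    exact Finset.prod_congr rfl fun i _ => if_pos (h i)
  · rw [Set.indicator_of_notMem (by simpa using h)]
    push_neg at h
    obtain ⟨i, hi⟩ := h
    exact Finset.prod_eq_zero (Finset.mem_univ i) (if_neg (by omega))

/-- Correlation-type comparison (Proposition 25): if `U₁,…,U_m` are ℕ-valued random
variables, each distributed like `U`, and `f₁,…,f_m : ℕ → [0,∞)` are non-decreasing,
then `E[∏ f_i(U_i)] ≤ E[∏ f_i(U)]` (expectations in `[0,∞]`). -/
theorem stmt_6 {Ω : Type*} [MeasurableSpace Ω] (μ : Measure Ω)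
    [IsProbabilityMeasure μ] (m : ℕ) (hm : 1 ≤ m)
    (U : Ω → ℕ) (U' : Fin m → Ω → ℕ)
    (hU : Measurable U) (hU' : ∀ i, Measurable (U' i))
    (hdist : ∀ i, Measure.map (U' i) μ = Measure.map U μ)
    (f : Fin m → ℕ → ℝ≥0) (hf : ∀ i, Monotone (f i)) :
    (∫⁻ ω, ∏ i, (f i (U' i ω) : ℝ≥0∞) ∂μ) ≤ ∫⁻ ω, ∏ i, (f i (U ω) : ℝ≥0∞) ∂μ := by
  set a : Fin m → ℕ → ℝ≥0∞ := fun i k => (stmt6Aux (f i) k : ℝ≥0∞) with ha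
  -- rewrite both sides via the layer-cake decomposition
  have key : ∀ (V : Fin m → Ω → ℕ), (∀ i, Measurable (V i)) →
      (∫⁻ ω, ∏ i, (f i (V i ω) : ℝ≥0∞) ∂μ) =
      ∑' k : Fin m → ℕ, (∏ i, a i (k i)) * μ (⋂ i, V i ⁻¹' {n | k i ≤ n}) := by
    intro V hV
    have hrw : ∀ ω, ∏ i, (f i (V i ω) : ℝ≥0∞) =
        ∑' k : Fin m → ℕ, ∏ i, (if k i ≤ V i ω then a i (k i) else 0) := by
      intro ω
      rw [Finset.prod_congr rfl (fun i _ => stmt6_rep (f i) (hf i) (V i ω))]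
      exact stmt6_prod_tsum m (fun i k => if k ≤ V i ω then a i k else 0)
    have hmeas : ∀ k : Fin m → ℕ,
        MeasurableSet (⋂ i, V i ⁻¹' {n | k i ≤ n}) := by
      intro k
      exact MeasurableSet.iInter fun i => (hV i) (by trivial)
    calc (∫⁻ ω, ∏ i, (f i (V i ω) : ℝ≥0∞) ∂μ)
        = ∫⁻ ω, ∑' k : Fin m → ℕ,
            ∏ i, (if k i ≤ V i ω then a i (k i) else 0) ∂μ := by
          exact lintegral_congr hrw
      _ = ∑' k : Fin m → ℕ,
            ∫⁻ ω, ∏ i, (if k i ≤ V i ω then a i (k i) else 0) ∂μ := by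
          refine lintegral_tsum fun k => ?_
          rw [stmt6_term_eq m V k (fun i => a i (k i))]
          exact ((measurable_const).indicator (hmeas k)).aemeasurable
      _ = ∑' k : Fin m → ℕ, (∏ i, a i (k i)) * μ (⋂ i, V i ⁻¹' {n | k i ≤ n}) := by
          refine tsum_congr fun k => ?_
          rw [stmt6_term_eq m V k (fun i => a i (k i)),
            lintegral_indicator_const (hmeas k)]
  rw [key U' hU', key (fun _ => U) (fun _ => hU)]
  refine ENNReal.tsum_le_tsum fun k => ?_
  refine mul_le_mul_right ?_ _
  -- pick a maximizer of k
  obtain ⟨j, -, hj⟩ := Finset.exists_max_image Finset.univ k ⟨⟨0, hm⟩, Finset.mem_univ _⟩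
  have hset : (⋂ i, (fun _ => U) i ⁻¹' {n | k i ≤ n}) = U ⁻¹' {n | k j ≤ n} := by
    ext ω
    simp only [Set.mem_iInter, Set.mem_preimage, Set.mem_setOf_eq]
    exact ⟨fun h => h j, fun h i => le_trans (hj i (Finset.mem_univ i)) h⟩
  rw [hset]
  calc μ (⋂ i, U' i ⁻¹' {n | k i ≤ n})
      ≤ μ (U' j ⁻¹' {n | k j ≤ n}) := measure_mono (Set.iInter_subset _ j)
    _ = (Measure.map (U' j) μ) {n | k j ≤ n} := by
        rw [Measure.map_apply (hU' j) (by trivial)]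
    _ = (Measure.map U μ) {n | k j ≤ n} := by rw [hdist j]
    _ = μ (U ⁻¹' {n | k j ≤ n}) := Measure.map_apply hU (by trivial)
end

section
/- Let x > 2 be a real number and let p be a probability mass function on pairs of positive integers with ∑_{l₁,l₂ ≥ 1} (l₁ + l₂)·p(l₁,l₂) = x. Then the Shannon entropy satisfies H(p) ≤ x·f(x), where f(x) = −2/x − (1 − 2/x)·log₂(x − 2) + log₂ x, and equality holds if and only if p(l₁,l₂) = (λ−1)²·λ^{−(l₁+l₂)} for all l₁, l₂ ≥ 1, where λ = x/(x−2). -/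
/-!
Gibbs' inequality against the geometric pmf `q(l₁, l₂) = (λ - 1)² λ^{-(l₁+l₂)}`,
`λ = x / (x - 2)`: termwise, `-p log p = -p log q - q · klFun (p / q) + (q - p)`
(in natural log), and `klFun ≥ 0` vanishes only at `1`, so `H(p) ≤ -∑ p log q` with equality
iff `p = q`. Since `log q` is affine in `l₁ + l₂`, the cross entropy `-∑ p log q` depends on `p`
only through its mass and its mean `x`, and equals `x f(x)`.
-/

open Real InformationTheory

lemma mul_klFun_div {p q : ℝ} (hp : 0 ≤ p) (hq : 0 < q) :
    q * klFun (p / q) = p * log p - p * log q + (q - p) := by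
  rcases hp.eq_or_lt with rfl | hp
  · simp [klFun]
  · rw [klFun, log_div hp.ne' hq.ne']
    field_simp
    ring

lemma mul_klFun_div_nonneg {p q : ℝ} (hp : 0 ≤ p) (hq : 0 < q) : 0 ≤ q * klFun (p / q) :=
  mul_nonneg hq.le (klFun_nonneg (div_nonneg hp hq.le))

lemma mul_klFun_div_eq_zero_iff {p q : ℝ} (hp : 0 ≤ p) (hq : 0 < q) :
    q * klFun (p / q) = 0 ↔ p = q := by
  rw [mul_eq_zero, klFun_eq_zero_iff (div_nonneg hp hq.le), div_eq_one_iff_eq hq.ne']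
  simp [hq.ne']

section Gibbs

variable {ι : Type*} {b s : ℝ} {p q : ι → ℝ}

lemma hasSum_mul_klFun_div_div_log (hb : 1 < b) (hp : ∀ i, 0 ≤ p i) (hq : ∀ i, 0 < q i)
    (hp_sum : HasSum p s) (hq_sum : HasSum q s)
    (hent : Summable fun i => -(p i * logb b (p i)))
    (hcross : Summable fun i => -(p i * logb b (q i))) :
    HasSum (fun i => q i * klFun (p i / q i) / log b)
      (∑' i, -(p i * logb b (q i)) - ∑' i, -(p i * logb b (p i))) := by
  have hb0 : log b ≠ 0 := (log_pos hb).ne'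
  have h := (hcross.hasSum.sub hent.hasSum).add ((hq_sum.sub hp_sum).div_const (log b))
  rw [sub_self, zero_div, add_zero] at h
  refine h.congr_fun fun i => ?_
  rw [mul_klFun_div (hp i) (hq i), logb, logb]
  field_simp
  ring

theorem tsum_neg_mul_logb_le_tsum_neg_mul_logb (hb : 1 < b) (hp : ∀ i, 0 ≤ p i)
    (hq : ∀ i, 0 < q i) (hp_sum : HasSum p s) (hq_sum : HasSum q s)
    (hent : Summable fun i => -(p i * logb b (p i)))
    (hcross : Summable fun i => -(p i * logb b (q i))) :
    ∑' i, -(p i * logb b (p i)) ≤ ∑' i, -(p i * logb b (q i)) :=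
  sub_nonneg.1 <| (hasSum_mul_klFun_div_div_log hb hp hq hp_sum hq_sum hent hcross).nonneg
    fun i => div_nonneg (mul_klFun_div_nonneg (hp i) (hq i)) (log_pos hb).le

theorem tsum_neg_mul_logb_eq_tsum_neg_mul_logb_iff (hb : 1 < b) (hp : ∀ i, 0 ≤ p i)
    (hq : ∀ i, 0 < q i) (hp_sum : HasSum p s) (hq_sum : HasSum q s)
    (hent : Summable fun i => -(p i * logb b (p i)))
    (hcross : Summable fun i => -(p i * logb b (q i))) :
    ∑' i, -(p i * logb b (p i)) = ∑' i, -(p i * logb b (q i)) ↔ p = q := by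
  refine ⟨fun h_eq => funext fun i => ?_, fun h => h ▸ rfl⟩
  have h := hasSum_mul_klFun_div_div_log hb hp hq hp_sum hq_sum hent hcross
  rw [h_eq, sub_self, hasSum_zero_iff_of_nonneg fun i =>
    div_nonneg (mul_klFun_div_nonneg (hp i) (hq i)) (log_pos hb).le] at h
  have hi := congrFun h i
  rwa [Pi.zero_apply, div_eq_zero_iff, or_iff_left (log_pos hb).ne',
    mul_klFun_div_eq_zero_iff (hp i) (hq i)] at hi

end Gibbs

lemma hasSum_pnat_geometric {r : ℝ} (h0 : 0 ≤ r) (h1 : r < 1) :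
    HasSum (fun n : ℕ+ => r ^ (n : ℕ)) (r / (1 - r)) := by
  refine hasSum_pnat_iff_hasSum_succ.2 ?_
  simpa only [pow_succ', div_eq_mul_inv] using (hasSum_geometric_of_lt_one h0 h1).mul_left r

noncomputable def pnatPairGeometric (a : ℝ) (t : ℕ+ × ℕ+) : ℝ :=
  (a - 1) ^ 2 * a ^ (-(((t.1 : ℕ) + (t.2 : ℕ) : ℕ) : ℤ))

section pnatPairGeometric

variable {a : ℝ}

lemma pnatPairGeometric_eq (t : ℕ+ × ℕ+) :
    pnatPairGeometric a t = (a - 1) ^ 2 * (a⁻¹ ^ (t.1 : ℕ) * a⁻¹ ^ (t.2 : ℕ)) := by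
  rw [pnatPairGeometric, zpow_neg, zpow_natCast, ← inv_pow, pow_add]

lemma pnatPairGeometric_pos (ha : 1 < a) (t : ℕ+ × ℕ+) : 0 < pnatPairGeometric a t := by
  have : 0 < a - 1 := sub_pos.2 ha
  unfold pnatPairGeometric
  positivity

lemma hasSum_pnatPairGeometric (ha : 1 < a) : HasSum (pnatPairGeometric a) 1 := by
  have ha0 : 0 < a := one_pos.trans ha
  have hr0 : 0 ≤ a⁻¹ := inv_nonneg.2 ha0.le
  have hr1 : a⁻¹ < 1 := inv_lt_one_of_one_lt₀ ha
  have hgeo := hasSum_pnat_geometric hr0 hr1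
  have hprod := (hgeo.mul hgeo (hgeo.summable.mul_of_nonneg hgeo.summable
    (fun _ => pow_nonneg hr0 _) (fun _ => pow_nonneg hr0 _))).mul_left ((a - 1) ^ 2)
  have hsum : (a - 1) ^ 2 * (a⁻¹ / (1 - a⁻¹) * (a⁻¹ / (1 - a⁻¹))) = 1 := by
    have : a⁻¹ / (1 - a⁻¹) = (a - 1)⁻¹ := by
      rw [← one_div, one_sub_div ha0.ne', div_div_div_cancel_right₀ ha0.ne', one_div]
    rw [this, ← sq, ← mul_pow, mul_inv_cancel₀ (sub_pos.2 ha).ne', one_pow]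
  rw [hsum] at hprod
  exact hprod.congr_fun pnatPairGeometric_eq

lemma logb_pnatPairGeometric (b : ℝ) (ha : 1 < a) (t : ℕ+ × ℕ+) :
    logb b (pnatPairGeometric a t) = 2 * logb b (a - 1) - ((t.1 : ℝ) + t.2) * logb b a := by
  have ha0 : 0 < a := one_pos.trans ha
  rw [pnatPairGeometric, logb_mul (pow_ne_zero _ (sub_pos.2 ha).ne') (zpow_ne_zero _ ha0.ne'),
    logb_pow]
  simp only [logb, log_zpow]
  push_cast
  ring

lemma hasSum_neg_mul_logb_pnatPairGeometric {b x : ℝ} {p : ℕ+ × ℕ+ → ℝ} (ha : 1 < a)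
    (hp : HasSum p 1) (hmean : HasSum (fun t => ((t.1 : ℝ) + t.2) * p t) x) :
    HasSum (fun t => -(p t * logb b (pnatPairGeometric a t)))
      (x * logb b a - 2 * logb b (a - 1)) := by
  have h := (hmean.mul_right (logb b a)).sub (hp.mul_left (2 * logb b (a - 1)))
  rw [mul_one] at h
  refine h.congr_fun fun t => ?_
  rw [logb_pnatPairGeometric b ha]
  ring

end pnatPairGeometric

lemma mul_logb_div_sub_two_mul_logb {x : ℝ} (hx : 2 < x) :
    x * logb 2 (x / (x - 2)) - 2 * logb 2 (x / (x - 2) - 1) =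
      x * (-2 / x - (1 - 2 / x) * logb 2 (x - 2) + logb 2 x) := by
  have hx0 : x ≠ 0 := by linarith
  have hx2 : x - 2 ≠ 0 := by linarith
  have : x / (x - 2) - 1 = 2 / (x - 2) := by field_simp; ring
  rw [this, logb_div hx0 hx2, logb_div two_ne_zero hx2, logb_self_eq_one one_lt_two]
  field_simp
  ring

/-- Maximum-entropy bound for pairs (Eq. (21) of the paper): if `p` is a pmf on pairs
of positive integers with `∑ (l₁+l₂)·p(l₁,l₂) = x` for some `x > 2`, then its Shannon
entropy (in bits) is at most `x·f(x)` where
`f(x) = -2/x - (1-2/x)·log₂(x-2) + log₂ x`, with equality iff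
`p(l₁,l₂) = (λ-1)²·λ^{-(l₁+l₂)}` with `λ = x/(x-2)`. -/
theorem stmt_8 (x : ℝ) (hx : 2 < x) (p : ℕ+ × ℕ+ → ℝ)
    (hnn : ∀ t, 0 ≤ p t) (hsum : ∑' t : ℕ+ × ℕ+, p t = 1)
    (hmeanS : Summable fun t : ℕ+ × ℕ+ => ((t.1 : ℝ) + (t.2 : ℝ)) * p t)
    (hmean : ∑' t : ℕ+ × ℕ+, ((t.1 : ℝ) + (t.2 : ℝ)) * p t = x)
    (hentS : Summable fun t : ℕ+ × ℕ+ => -(p t * Real.logb 2 (p t))) :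
    (∑' t : ℕ+ × ℕ+, -(p t * Real.logb 2 (p t))) ≤
        x * (-2 / x - (1 - 2 / x) * Real.logb 2 (x - 2) + Real.logb 2 x) ∧
      ((∑' t : ℕ+ × ℕ+, -(p t * Real.logb 2 (p t))) =
          x * (-2 / x - (1 - 2 / x) * Real.logb 2 (x - 2) + Real.logb 2 x) ↔
        ∀ t : ℕ+ × ℕ+,
          p t = (x / (x - 2) - 1) ^ 2 *
            (x / (x - 2)) ^ (-(((t.1 : ℕ) + (t.2 : ℕ) : ℕ) : ℤ))) := by
  have ha : 1 < x / (x - 2) := (one_lt_div (by linarith)).2 (by linarith)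
  have hpS : Summable p := by
    by_contra h
    exact zero_ne_one ((tsum_eq_zero_of_not_summable h).symm.trans hsum)
  have hp : HasSum p 1 := hpS.hasSum_iff.2 hsum
  have hcross :=
    hasSum_neg_mul_logb_pnatPairGeometric (b := 2) ha hp (hmeanS.hasSum_iff.2 hmean)
  rw [← mul_logb_div_sub_two_mul_logb hx, ← hcross.tsum_eq, ← funext_iff]
  exact ⟨tsum_neg_mul_logb_le_tsum_neg_mul_logb one_lt_two hnn (pnatPairGeometric_pos ha) hp
      (hasSum_pnatPairGeometric ha) hentS hcross.summable,
    tsum_neg_mul_logb_eq_tsum_neg_mul_logb_iff one_lt_two hnn (pnatPairGeometric_pos ha) hp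
      (hasSum_pnatPairGeometric ha) hentS hcross.summable⟩
end

section
/- There exist d₀ > 0 and a constant κ < ∞ such that the following holds for every real β > 1/2 and every 0 < d < d₀: if p is a probability mass function on pairs of positive integers with finite x = ∑_{l₁,l₂≥1} (l₁+l₂)·p(l₁,l₂) and Shannon entropy H(p) ≥ (1 − d^β)·x, then |x − 4| ≤ κ·d^{β/2}. -/
open Real

noncomputable def geoP (r : ℝ) (n : ℕ+) : ℝ := (1 - r) * r ^ ((n : ℕ) - 1)

lemma geoP_summable {r : ℝ} (h0 : 0 ≤ r) (h1 : r < 1) : Summable (geoP r) := by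
  have hg : Summable (fun k : ℕ => (1 - r) * r ^ k) :=
    (summable_geometric_of_lt_one h0 h1).mul_left _
  have : Summable ((geoP r) ∘ (Equiv.pnatEquivNat).symm) := by
    refine hg.congr fun k => ?_
    simp [geoP, Equiv.pnatEquivNat, Nat.succPNat]
  exact (Equiv.pnatEquivNat).symm.summable_iff.mp this

lemma geoP_tsum {r : ℝ} (h0 : 0 ≤ r) (h1 : r < 1) : ∑' n : ℕ+, geoP r n = 1 := by
  rw [← (Equiv.pnatEquivNat).symm.tsum_eq (geoP r)]
  have : (fun k : ℕ => geoP r ((Equiv.pnatEquivNat).symm k)) = fun k : ℕ => (1 - r) * r ^ k := by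
    funext k; simp [geoP, Equiv.pnatEquivNat, Nat.succPNat]
  rw [this, tsum_mul_left, tsum_geometric_of_lt_one h0 h1]
  exact div_self (by linarith)

lemma geoP_nonneg {r : ℝ} (h0 : 0 ≤ r) (h1 : r < 1) : ∀ n, 0 ≤ geoP r n := fun n =>
  mul_nonneg (by linarith) (pow_nonneg h0 _)

lemma geoP2_summable {r : ℝ} (h0 : 0 ≤ r) (h1 : r < 1) :
    Summable (fun t : ℕ+ × ℕ+ => geoP r t.1 * geoP r t.2) :=
  Summable.mul_of_nonneg (geoP_summable h0 h1) (geoP_summable h0 h1)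
    (geoP_nonneg h0 h1) (geoP_nonneg h0 h1)

lemma geoP2_tsum {r : ℝ} (h0 : 0 ≤ r) (h1 : r < 1) :
    ∑' t : ℕ+ × ℕ+, geoP r t.1 * geoP r t.2 = 1 := by
  have := tsum_mul_tsum_of_summable_norm (R := ℝ)
    (f := geoP r) (g := geoP r)
    (by simpa [Real.norm_eq_abs, abs_of_nonneg, geoP_nonneg h0 h1] using
      (geoP_summable h0 h1).abs) (by simpa using (geoP_summable h0 h1).abs)
  rw [← this, geoP_tsum h0 h1, one_mul]

lemma log_geoP2 {r : ℝ} (h0 : 0 < r) (h1 : r < 1) (t : ℕ+ × ℕ+) :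
    Real.log (geoP r t.1 * geoP r t.2) =
      2 * Real.log (1 - r) + ((t.1 : ℝ) + (t.2 : ℝ) - 2) * Real.log r := by
  have h1r : (0:ℝ) < 1 - r := by linarith
  have hgpos : ∀ n : ℕ+, 0 < geoP r n := fun n => mul_pos h1r (pow_pos h0 _)
  have hl : ∀ n : ℕ+, Real.log (geoP r n) = Real.log (1 - r) + ((n : ℝ) - 1) * Real.log r := by
    intro n
    have hc : (((n : ℕ) - 1 : ℕ) : ℝ) = (n : ℝ) - 1 := by
      rw [Nat.cast_sub n.pos]; simp
    rw [geoP, Real.log_mul (ne_of_gt h1r) (ne_of_gt (pow_pos h0 _)), Real.log_pow, hc]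
  rw [Real.log_mul (ne_of_gt (hgpos t.1)) (ne_of_gt (hgpos t.2)), hl t.1, hl t.2]
  ring

/-- Gibbs' inequality against the product geometric distribution. -/
lemma gibbs (p : ℕ+ × ℕ+ → ℝ) (hp0 : ∀ t, 0 ≤ p t) (hp1 : ∑' t, p t = 1)
    (hsum : Summable fun t : ℕ+ × ℕ+ => ((t.1 : ℝ) + (t.2 : ℝ)) * p t)
    (r : ℝ) (hr0 : 0 < r) (hr1 : r < 1) :
    (∑' t : ℕ+ × ℕ+, -(p t * Real.log (p t))) ≤
      -2 * Real.log (1 - r) -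
        ((∑' t : ℕ+ × ℕ+, ((t.1 : ℝ) + (t.2 : ℝ)) * p t) - 2) * Real.log r := by
  have hps : Summable p := by
    by_contra h
    rw [tsum_eq_zero_of_not_summable h] at hp1
    norm_num at hp1
  set q : ℕ+ × ℕ+ → ℝ := fun t => geoP r t.1 * geoP r t.2 with hqdef
  have hq_pos : ∀ t, 0 < q t := fun t =>
    mul_pos (mul_pos (by linarith) (pow_pos hr0 _)) (mul_pos (by linarith) (pow_pos hr0 _))
  have hqs : Summable q := geoP2_summable hr0.le hr1
  have hqt : ∑' t, q t = 1 := geoP2_tsum hr0.le hr1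
  set c1 := Real.log (1 - r) with hc1
  set c2 := Real.log r with hc2
  -- pointwise bound
  have key : ∀ t, -(p t * Real.log (p t)) ≤ -(p t * Real.log (q t)) + (q t - p t) := by
    intro t
    rcases eq_or_lt_of_le (hp0 t) with h | h
    · rw [← h]; simp [(hq_pos t).le]
    · have hlog := Real.log_le_sub_one_of_pos (div_pos (hq_pos t) h)
      rw [Real.log_div (ne_of_gt (hq_pos t)) (ne_of_gt h)] at hlog
      have hmul := mul_le_mul_of_nonneg_left hlog h.le
      have hc : p t * (q t / p t) = q t := mul_div_cancel₀ _ (ne_of_gt h)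
      nlinarith [hmul, hc]
  -- the right-hand side as an explicit function
  have hg_eq : (fun t : ℕ+ × ℕ+ => -(p t * Real.log (q t)) + (q t - p t)) =
      fun t : ℕ+ × ℕ+ => (-c2) * (((t.1 : ℝ) + (t.2 : ℝ)) * p t) +
        (((2*c2 - 2*c1 - 1) * p t) + q t) := by
    funext t
    rw [hqdef]
    rw [log_geoP2 hr0 hr1 t]
    ring
  have hs1 : Summable fun t : ℕ+ × ℕ+ => (-c2) * (((t.1 : ℝ) + (t.2 : ℝ)) * p t) :=
    hsum.mul_left _
  have hs2 : Summable fun t : ℕ+ × ℕ+ => (2*c2 - 2*c1 - 1) * p t := hps.mul_left _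
  have hs3 : Summable fun t : ℕ+ × ℕ+ => ((2*c2 - 2*c1 - 1) * p t) + q t := hs2.add hqs
  have hgs : Summable fun t : ℕ+ × ℕ+ => -(p t * Real.log (q t)) + (q t - p t) := by
    rw [hg_eq]; exact hs1.add hs3
  -- entropy terms are nonneg
  have hple1 : ∀ t, p t ≤ 1 := by
    intro t
    have := Summable.le_tsum hps t (fun j _ => hp0 j)
    rwa [hp1] at this
  have hent_nn : ∀ t, 0 ≤ -(p t * Real.log (p t)) := by
    intro t
    have : Real.log (p t) ≤ 0 := Real.log_nonpos (hp0 t) (hple1 t)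
    nlinarith [hp0 t]
  have hS : Summable fun t : ℕ+ × ℕ+ => -(p t * Real.log (p t)) :=
    Summable.of_nonneg_of_le hent_nn key hgs
  have hle := Summable.tsum_le_tsum key hS hgs
  rw [hg_eq, Summable.tsum_add hs1 hs3, Summable.tsum_add hs2 hqs, tsum_mul_left, tsum_mul_left, hp1, hqt] at hle
  calc (∑' t : ℕ+ × ℕ+, -(p t * Real.log (p t)))
      ≤ -c2 * (∑' t : ℕ+ × ℕ+, ((t.1 : ℝ) + (t.2 : ℝ)) * p t) + ((2*c2 - 2*c1 - 1) * 1 + 1) :=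
        hle
    _ = -2 * c1 - ((∑' t : ℕ+ × ℕ+, ((t.1 : ℝ) + (t.2 : ℝ)) * p t) - 2) * c2 := by ring

set_option maxHeartbeats 2000000 in
/-- There exist `d₀ > 0` and `κ < ∞` such that for every `β > 1/2` and `0 < d < d₀`:
if `p` is a pmf on pairs of positive integers with finite `x = ∑ (l₁+l₂)·p(l₁,l₂)`
and Shannon entropy (in bits) at least `(1 - d^β)·x`, then `|x - 4| ≤ κ·d^(β/2)`. -/
theorem stmt_9 :
    ∃ d₀ : ℝ, 0 < d₀ ∧ ∃ κ : ℝ,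
      ∀ β : ℝ, 1 / 2 < β →
        ∀ d : ℝ, 0 < d → d < d₀ →
          ∀ p : ℕ+ × ℕ+ → ℝ, (∀ t, 0 ≤ p t) → (∑' t : ℕ+ × ℕ+, p t = 1) →
            (Summable fun t : ℕ+ × ℕ+ => ((t.1 : ℝ) + (t.2 : ℝ)) * p t) →
            (1 - d ^ β) * (∑' t : ℕ+ × ℕ+, ((t.1 : ℝ) + (t.2 : ℝ)) * p t) ≤
                (∑' t : ℕ+ × ℕ+, -(p t * Real.logb 2 (p t))) →
              |(∑' t : ℕ+ × ℕ+, ((t.1 : ℝ) + (t.2 : ℝ)) * p t) - 4| ≤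
                κ * d ^ (β / 2) := by
  refine ⟨(1/8:ℝ)^(4:ℕ), by norm_num, 64, ?_⟩
  intro β hβ d hd hdd p hp0 hp1 hsum hyp
  set x := ∑' t : ℕ+ × ℕ+, ((t.1 : ℝ) + (t.2 : ℝ)) * p t with hxdef
  set δ := d ^ (β/2 : ℝ) with hδdef
  have hδpos : 0 < δ := Real.rpow_pos_of_pos hd _
  have hd1 : d ≤ 1 := by
    have : ((1:ℝ)/8)^(4:ℕ) ≤ 1 := by norm_num
    linarith
  have hδ8 : δ < 1/8 := by
    have h1 : δ ≤ d ^ (1/4 : ℝ) :=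
      Real.rpow_le_rpow_of_exponent_ge hd hd1 (by linarith)
    have h2 : d ^ (1/4:ℝ) < ((1/8:ℝ)^(4:ℕ)) ^ (1/4:ℝ) :=
      Real.rpow_lt_rpow hd.le hdd (by norm_num)
    have h3 : ((1/8:ℝ)^(4:ℕ)) ^ (1/4:ℝ) = 1/8 := by
      rw [← Real.rpow_natCast (1/8:ℝ) 4, ← Real.rpow_mul (by norm_num)]
      norm_num
    linarith
  set u := 2*δ with hudef
  have hupos : 0 < u := by linarith
  have hu14 : u ≤ 1/4 := by linarith
  have h1u : (0:ℝ) < 1 - u := by linarith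
  have h1u' : (0:ℝ) < 1 + u := by linarith
  have hεδ : d ^ (β : ℝ) = u^2/4 := by
    have : δ^2 = d ^ (β:ℝ) := by
      rw [hδdef, ← Real.rpow_natCast (d ^ (β/2 : ℝ)) 2, ← Real.rpow_mul hd.le]
      norm_num
    rw [← this, hudef]; ring
  -- basic facts about p
  have hps : Summable p := by
    by_contra h
    rw [tsum_eq_zero_of_not_summable h] at hp1
    norm_num at hp1
  have hx2 : 2 ≤ x := by
    have h2p : ∀ t : ℕ+ × ℕ+, 2 * p t ≤ ((t.1:ℝ)+(t.2:ℝ)) * p t := by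
      intro t
      have h1 : 1 ≤ (t.1 : ℕ) := t.1.one_le
      have h2 : 1 ≤ (t.2 : ℕ) := t.2.one_le
      have h1' : (1:ℝ) ≤ (t.1 : ℝ) := by exact_mod_cast h1
      have h2' : (1:ℝ) ≤ (t.2 : ℝ) := by exact_mod_cast h2
      nlinarith [hp0 t]
    have := Summable.tsum_le_tsum h2p (hps.mul_left 2) hsum
    rwa [tsum_mul_left, hp1, mul_one] at this
  -- entropy in nats
  have hlog2 : (0:ℝ) < Real.log 2 := Real.log_pos one_lt_two
  set S := ∑' t : ℕ+ × ℕ+, -(p t * Real.log (p t)) with hSdef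
  have hH : (∑' t : ℕ+ × ℕ+, -(p t * Real.logb 2 (p t))) = S * (Real.log 2)⁻¹ := by
    rw [hSdef, ← tsum_mul_right]
    exact tsum_congr fun t => by simp only [Real.logb]; ring
  set l := Real.log 2 with hldef
  have hyp' : (1 - u^2/4) * x * l ≤ S := by
    rw [hH, hεδ] at hyp
    have h2 : S * l⁻¹ * l = S := by field_simp
    nlinarith [mul_le_mul_of_nonneg_right hyp hlog2.le]
  -- Gibbs applications
  have hg1 := gibbs p hp0 hp1 hsum ((1+u)/2) (by linarith) (by linarith)
  have hg2 := gibbs p hp0 hp1 hsum ((1-u)/2) (by linarith) (by linarith)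
  rw [show (1:ℝ) - (1+u)/2 = (1-u)/2 by ring] at hg1
  rw [show (1:ℝ) - (1-u)/2 = (1+u)/2 by ring] at hg2
  rw [Real.log_div (ne_of_gt h1u) two_ne_zero, Real.log_div (ne_of_gt h1u') two_ne_zero]
    at hg1 hg2
  set a := Real.log (1+u) with hadef
  set b := Real.log (1-u) with hbdef
  -- log bounds
  have ha_ub : a ≤ u := by
    have := Real.log_le_sub_one_of_pos h1u'; rw [← hadef] at this; linarith
  have hb_ub : b ≤ -u := by
    have := Real.log_le_sub_one_of_pos h1u; rw [← hbdef] at this; linarith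
  have ha_lb : u - u^2 ≤ a := by
    have h := Real.log_le_sub_one_of_pos (inv_pos.mpr h1u')
    rw [Real.log_inv, ← hadef] at h
    have hinv : (1+u) * (1+u)⁻¹ = 1 := mul_inv_cancel₀ (ne_of_gt h1u')
    nlinarith [mul_le_mul_of_nonneg_left h h1u'.le, hinv, hupos]
  have hb_lb : -(u + 2*u^2) ≤ b := by
    have h := Real.log_le_sub_one_of_pos (inv_pos.mpr h1u)
    rw [Real.log_inv, ← hbdef] at h
    have hinv : (1-u) * (1-u)⁻¹ = 1 := mul_inv_cancel₀ (ne_of_gt h1u)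
    nlinarith [mul_le_mul_of_nonneg_left h h1u.le, hinv, hupos, hu14]
  have hl_ub : l < 0.7 := by
    have := Real.log_two_lt_d9; rw [← hldef] at this; linarith
  -- key inequalities
  have E1 : (x-2)*a + 2*b ≤ (u^2/4) * x * l := by nlinarith [hg1, hyp']
  have E2 : (x-2)*b + 2*a ≤ (u^2/4) * x * l := by nlinarith [hg2, hyp']
  have hxa : (x-2)*(u - u^2) ≤ (x-2)*a :=
    mul_le_mul_of_nonneg_left ha_lb (by linarith)
  have hxb : -((x-2)*(u + 2*u^2)) ≤ (x-2)*b := by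
    have := mul_le_mul_of_nonneg_left hb_lb (show (0:ℝ) ≤ x - 2 by linarith)
    linarith [this]
  have hrhs : (u^2/4) * x * l ≤ (u^2/4) * x * 0.7 := by
    have hx0 : (0:ℝ) ≤ (u^2/4) * x := by positivity
    nlinarith [hx0, hl_ub]
  have hx7 : x ≤ 7 := by
    nlinarith [E1, hxa, hrhs, hb_lb, hupos, hu14, hx2, mul_nonneg hupos.le (sub_nonneg.mpr hx2)]
  have hub : x - 4 ≤ 16*u := by
    nlinarith [E1, hxa, hrhs, hb_lb, hupos, hu14, hx2, hx7, sq_nonneg u,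
      mul_nonneg hupos.le hupos.le]
  have hlb : 4 - x ≤ 16*u := by
    nlinarith [E2, hxb, hrhs, ha_lb, hupos, hu14, hx2, hx7, sq_nonneg u]
  rw [abs_le]
  constructor <;> nlinarith [hub, hlb, hδpos]
end

section
/- The function f(x) = −2/x − (1 − 2/x)·log₂(x − 2) + log₂ x, defined for x > 2, satisfies f(4) = 1, is strictly increasing on (2,4] and strictly decreasing on [4,∞); in particular x = 4 is its unique global maximizer on (2,∞) and f(x) < 1 for every x ∈ (2,∞) with x ≠ 4. -/
/-! The derivative `f'(x) = (2 / x²) (1 - log₂ (x - 2))` has the sign of `4 - x`, since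
`log₂ (x - 2) = 1` exactly at `x - 2 = 2`. -/

open Real Set

noncomputable def superRunEntropy (x : ℝ) : ℝ :=
  -2 / x - (1 - 2 / x) * logb 2 (x - 2) + logb 2 x

noncomputable def superRunEntropyDeriv (x : ℝ) : ℝ :=
  2 / x ^ 2 * (1 - logb 2 (x - 2))

lemma hasDerivAt_superRunEntropy {x : ℝ} (hx : 2 < x) :
    HasDerivAt superRunEntropy (superRunEntropyDeriv x) x := by
  have hx0 : x ≠ 0 := by positivity
  have hx2 : x - 2 ≠ 0 := sub_ne_zero.mpr hx.ne'
  have hdiv (c : ℝ) := (hasDerivAt_const x c).div (hasDerivAt_id x) hx0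
  have hlogb_sub := (((hasDerivAt_id x).sub_const 2).log hx2).div_const (log 2)
  have hlogb := (hasDerivAt_log hx0).div_const (log 2)
  refine (((hdiv (-2)).sub (((hasDerivAt_const x 1).sub (hdiv 2)).mul hlogb_sub)).add
    hlogb).congr_deriv ?_
  have hlog2 : log 2 ≠ 0 := (log_pos one_lt_two).ne'
  simp only [superRunEntropyDeriv, logb, id, Pi.sub_apply, Pi.div_apply]
  field_simp
  ring

lemma continuousOn_superRunEntropy : ContinuousOn superRunEntropy (Ioi 2) :=
  fun _ hx => (hasDerivAt_superRunEntropy hx).continuousAt.continuousWithinAt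

lemma superRunEntropyDeriv_pos {x : ℝ} (hx2 : 2 < x) (hx4 : x < 4) :
    0 < superRunEntropyDeriv x := by
  have hlogb : logb 2 (x - 2) < 1 := by
    rw [logb_lt_iff_lt_rpow one_lt_two (by linarith : 0 < x - 2)]; norm_num; linarith
  have : 0 < 2 / x ^ 2 := by positivity
  exact mul_pos this (by linarith)

lemma superRunEntropyDeriv_neg {x : ℝ} (hx : 4 < x) : superRunEntropyDeriv x < 0 := by
  have hlogb : 1 < logb 2 (x - 2) := by
    rw [lt_logb_iff_rpow_lt one_lt_two (by linarith : 0 < x - 2)]; norm_num; linarith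
  have : 0 < 2 / x ^ 2 := by positivity
  exact mul_neg_of_pos_of_neg this (by linarith)

lemma superRunEntropy_four : superRunEntropy 4 = 1 := by
  have hlogb4 : logb 2 4 = 2 := by
    rw [show (4 : ℝ) = 2 ^ (2 : ℝ) by norm_num, logb_rpow two_pos (by norm_num)]
  norm_num [superRunEntropy, hlogb4]

lemma strictMonoOn_superRunEntropy : StrictMonoOn superRunEntropy (Ioc 2 4) := by
  refine strictMonoOn_of_hasDerivWithinAt_pos (f' := superRunEntropyDeriv) (convex_Ioc 2 4)
    (continuousOn_superRunEntropy.mono Ioc_subset_Ioi_self) (fun x hx => ?_) (fun x hx => ?_)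
  all_goals rw [interior_Ioc] at hx
  · exact (hasDerivAt_superRunEntropy hx.1).hasDerivWithinAt
  · exact superRunEntropyDeriv_pos hx.1 hx.2

lemma strictAntiOn_superRunEntropy : StrictAntiOn superRunEntropy (Ici 4) := by
  refine strictAntiOn_of_hasDerivWithinAt_neg (f' := superRunEntropyDeriv) (convex_Ici 4)
    (continuousOn_superRunEntropy.mono (Ici_subset_Ioi.mpr (by norm_num)))
    (fun x hx => ?_) (fun x hx => ?_)
  all_goals rw [interior_Ici, mem_Ioi] at hx
  · exact (hasDerivAt_superRunEntropy (by linarith)).hasDerivWithinAt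
  · exact superRunEntropyDeriv_neg hx

lemma superRunEntropy_lt_one {x : ℝ} (hx : 2 < x) (hx4 : x ≠ 4) : superRunEntropy x < 1 := by
  rw [← superRunEntropy_four]
  rcases hx4.lt_or_gt with h | h
  · exact strictMonoOn_superRunEntropy ⟨hx, h.le⟩ ⟨by norm_num, le_rfl⟩ h
  · exact strictAntiOn_superRunEntropy (mem_Ici.mpr le_rfl) (mem_Ici.mpr h.le) h

/-- The function `f(x) = -2/x - (1-2/x)·log₂(x-2) + log₂ x` (defined for `x > 2`)
satisfies `f(4) = 1`, is strictly increasing on `(2,4]`, strictly decreasing on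
`[4,∞)`, and `f(x) < 1` for every `x > 2` with `x ≠ 4` (so `x = 4` is the unique
global maximizer on `(2,∞)`). -/
theorem stmt_10 :
    (fun x : ℝ => -2 / x - (1 - 2 / x) * Real.logb 2 (x - 2) + Real.logb 2 x) 4 = 1 ∧
      StrictMonoOn
        (fun x : ℝ => -2 / x - (1 - 2 / x) * Real.logb 2 (x - 2) + Real.logb 2 x)
        (Set.Ioc 2 4) ∧
      StrictAntiOn
        (fun x : ℝ => -2 / x - (1 - 2 / x) * Real.logb 2 (x - 2) + Real.logb 2 x)
        (Set.Ici 4) ∧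
      ∀ x : ℝ, 2 < x → x ≠ 4 →
        -2 / x - (1 - 2 / x) * Real.logb 2 (x - 2) + Real.logb 2 x < 1 :=
  ⟨superRunEntropy_four, strictMonoOn_superRunEntropy, strictAntiOn_superRunEntropy,
    fun _ hx hx4 => superRunEntropy_lt_one hx hx4⟩
end

section
/- There exists d₀ > 0 such that the following holds for every real β > 1/2 and every 0 < d < d₀: let ℓ = ⌊2β·log₂(1/d)⌋; if p is a probability mass function on pairs of positive integers with finite x = ∑_{l₁,l₂≥1} (l₁+l₂)·p(l₁,l₂) and Shannon entropy H(p) ≥ (1 − d^β)·x, then ∑_{(l₁,l₂) : l₁+l₂ ≥ ℓ} (l₁+l₂)·p(l₁,l₂) ≤ 40·d^β. -/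
set_option maxHeartbeats 2000000

lemma aux_gibbs {a b : ℝ} (ha : 0 ≤ a) (hb : 0 < b) :
    -(a * Real.log a) ≤ -(a * Real.log b) + (b - a) := by
  rcases eq_or_lt_of_le ha with h | h
  · rw [← h]; simpa using hb.le
  · have hd : 0 < b / a := div_pos hb h
    have hlog := Real.log_le_sub_one_of_pos hd
    rw [Real.log_div (ne_of_gt hb) (ne_of_gt h)] at hlog
    have h2 := mul_le_mul_of_nonneg_left hlog (le_of_lt h)
    have hba : a * (b / a - 1) = b - a := by field_simp
    nlinarith

lemma aux_pnat_geom {u : ℝ} (h0 : 0 ≤ u) (h1 : u < 1) :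
    Summable (fun l : ℕ+ => u ^ (l : ℕ)) ∧ ∑' l : ℕ+, u ^ (l : ℕ) = u / (1 - u) := by
  have hnat : Summable (fun n : ℕ => u * u ^ n) :=
    (summable_geometric_of_lt_one h0 h1).mul_left u
  have he : ∀ n : ℕ, ((Equiv.pnatEquivNat.symm n : ℕ+) : ℕ) = n + 1 := by
    intro n; simp [Equiv.pnatEquivNat]
  constructor
  · rw [← Equiv.pnatEquivNat.symm.summable_iff]
    refine hnat.congr fun n => ?_
    simp [Function.comp, he, pow_succ, mul_comm]
  · rw [← Equiv.pnatEquivNat.symm.tsum_eq]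
    have : ∀ n : ℕ, u ^ ((Equiv.pnatEquivNat.symm n : ℕ+) : ℕ) = u * u ^ n := by
      intro n; rw [he, pow_succ, mul_comm]
    rw [tsum_congr this, tsum_mul_left, tsum_geometric_of_lt_one h0 h1, div_eq_mul_inv]

lemma aux_geom2 {c : ℝ} (hc : 0 < c) :
    Summable (fun t : ℕ+ × ℕ+ => (2:ℝ) ^ (-(c * ((t.1:ℝ) + (t.2:ℝ))))) ∧
      ∑' t : ℕ+ × ℕ+, (2:ℝ) ^ (-(c * ((t.1:ℝ) + (t.2:ℝ)))) =
        ((2:ℝ)^(-c) / (1 - (2:ℝ)^(-c)))^2 := by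
  set u := (2:ℝ)^(-c) with hu
  have hu0 : 0 < u := Real.rpow_pos_of_pos two_pos _
  have hu1 : u < 1 := Real.rpow_lt_one_of_one_lt_of_neg one_lt_two (neg_neg_of_pos hc)
  have e1 : ∀ m : ℕ+, u ^ (m:ℕ) = (2:ℝ) ^ (-(c*(m:ℝ))) := by
    intro m
    rw [hu, ← Real.rpow_natCast ((2:ℝ)^(-c)) (m:ℕ), ← Real.rpow_mul (by norm_num : (0:ℝ) ≤ 2)]
    congr 1; push_cast; ring
  have hpt : ∀ t : ℕ+ × ℕ+,
      (2:ℝ)^(-(c * ((t.1:ℝ)+(t.2:ℝ)))) = u ^ ((t.1:ℕ)) * u ^ ((t.2:ℕ)) := by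
    intro t
    rw [e1, e1, ← Real.rpow_add two_pos]
    congr 1; ring
  obtain ⟨hsum1, htsum1⟩ := aux_pnat_geom hu0.le hu1
  have hprodsum : Summable (fun t : ℕ+ × ℕ+ => u ^ ((t.1:ℕ)) * u ^ ((t.2:ℕ))) :=
    hsum1.mul_of_nonneg hsum1 (fun l => pow_nonneg hu0.le _) (fun l => pow_nonneg hu0.le _)
  constructor
  · exact hprodsum.congr fun t => (hpt t).symm
  · have hnorm : Summable (fun l : ℕ+ => ‖u ^ (l:ℕ)‖) := by
      refine hsum1.congr fun l => ?_
      rw [Real.norm_eq_abs, abs_of_nonneg (pow_nonneg hu0.le _)]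
    have hmul := tsum_mul_tsum_of_summable_norm (f := fun l : ℕ+ => u ^ (l:ℕ))
      (g := fun l : ℕ+ => u ^ (l:ℕ)) hnorm hnorm
    rw [tsum_congr hpt, ← hmul, htsum1, sq]

lemma aux_geom2_le {c B : ℝ} (hc : 0 < c) (hB : 0 ≤ B)
    (h : (2:ℝ)^(-c) * (1+B) ≤ B) :
    ∑' t : ℕ+ × ℕ+, (2:ℝ) ^ (-(c * ((t.1:ℝ) + (t.2:ℝ)))) ≤ B^2 := by
  rw [(aux_geom2 hc).2]
  have hu0 : 0 < (2:ℝ)^(-c) := Real.rpow_pos_of_pos two_pos _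
  have hu1 : (2:ℝ)^(-c) < 1 := Real.rpow_lt_one_of_one_lt_of_neg one_lt_two (neg_neg_of_pos hc)
  have hdiv : (2:ℝ)^(-c) / (1 - (2:ℝ)^(-c)) ≤ B := by
    rw [div_le_iff₀ (by linarith)]
    nlinarith
  exact pow_le_pow_left₀ (div_nonneg hu0.le (by linarith)) hdiv 2

lemma aux_rpow34 : (2:ℝ)^(-(3/4:ℝ)) ≤ 3/5 := by
  have h4 : ((2:ℝ)^(-(3/4:ℝ)))^(4:ℕ) = 8⁻¹ := by
    rw [← Real.rpow_natCast ((2:ℝ)^(-(3/4:ℝ))) 4, ← Real.rpow_mul (by norm_num : (0:ℝ) ≤ 2)]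
    rw [show (-(3/4:ℝ) * ((4:ℕ):ℝ)) = ((-3:ℤ):ℝ) by push_cast; ring, Real.rpow_intCast]
    norm_num
  refine le_of_pow_le_pow_left₀ (n := 4) (by norm_num) (by norm_num) ?_
  rw [h4]; norm_num

lemma aux_rpow340 : (2:ℝ)^(-(3/40:ℝ)) ≤ 21/22 := by
  have h4 : ((2:ℝ)^(-(3/40:ℝ)))^(40:ℕ) = 8⁻¹ := by
    rw [← Real.rpow_natCast ((2:ℝ)^(-(3/40:ℝ))) 40, ← Real.rpow_mul (by norm_num : (0:ℝ) ≤ 2)]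
    rw [show (-(3/40:ℝ) * ((40:ℕ):ℝ)) = ((-3:ℤ):ℝ) by push_cast; ring, Real.rpow_intCast]
    norm_num
  refine le_of_pow_le_pow_left₀ (n := 40) (by norm_num) (by norm_num) ?_
  rw [h4]; norm_num

lemma aux_rpow1 : (2:ℝ)^(-(1:ℝ)) = 1/2 := by
  rw [Real.rpow_neg_one]; norm_num

lemma aux_rpow9 : (2:ℝ)^(-(9:ℝ)) = 1/512 := by
  rw [show (-(9:ℝ)) = ((-9:ℤ):ℝ) by norm_num, Real.rpow_intCast]
  norm_num

lemma aux_rpow7 : (2:ℝ)^(-(7:ℝ)) = 1/128 := by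
  rw [show (-(7:ℝ)) = ((-7:ℤ):ℝ) by norm_num, Real.rpow_intCast]
  norm_num

lemma aux_summable_ite {α : Type*} {f : α → ℝ} (hf : Summable f) (A : α → Prop)
    [DecidablePred A] : Summable fun t => if A t then f t else 0 := by
  have h := hf.indicator {t | A t}
  refine h.congr fun t => ?_
  by_cases ht : A t <;> simp [Set.indicator_apply, ht]

/-- There exists `d₀ > 0` such that for every `β > 1/2` and `0 < d < d₀`, with
`ℓ = ⌊2β·log₂(1/d)⌋`: if `p` is a pmf on pairs of positive integers with finite
`x = ∑ (l₁+l₂)·p(l₁,l₂)` and Shannon entropy (in bits) at least `(1 − d^β)·x`, then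
`∑_{l₁+l₂ ≥ ℓ} (l₁+l₂)·p(l₁,l₂) ≤ 40·d^β`. -/
theorem stmt_18 :
    ∃ d₀ : ℝ, 0 < d₀ ∧
      ∀ β : ℝ, 1 / 2 < β →
        ∀ d : ℝ, 0 < d → d < d₀ →
          ∀ p : ℕ+ × ℕ+ → ℝ, (∀ t, 0 ≤ p t) → (∑' t : ℕ+ × ℕ+, p t = 1) →
            (Summable fun t : ℕ+ × ℕ+ => ((t.1 : ℝ) + (t.2 : ℝ)) * p t) →
            (1 - d ^ β) * (∑' t : ℕ+ × ℕ+, ((t.1 : ℝ) + (t.2 : ℝ)) * p t) ≤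
                (∑' t : ℕ+ × ℕ+, -(p t * Real.logb 2 (p t))) →
              (∑' t : ℕ+ × ℕ+,
                  if Nat.floor (2 * β * Real.logb 2 (1 / d)) ≤ (t.1 : ℕ) + (t.2 : ℕ) then
                    ((t.1 : ℝ) + (t.2 : ℝ)) * p t
                  else 0) ≤ 40 * d ^ β := by
  refine ⟨(2:ℝ)^(-(400:ℝ)), Real.rpow_pos_of_pos two_pos _, ?_⟩
  intro β hβ d hd0 hdlt p hp0 hp1 hxs hH
  have hl2a : 0.6931 ≤ Real.log 2 := by linarith [Real.log_two_gt_d9]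
  have hl2b : Real.log 2 ≤ 0.6932 := by linarith [Real.log_two_lt_d9]
  have hl2pos : (0:ℝ) < Real.log 2 := by linarith
  set Lr := Real.logb 2 (1 / d) with hLrdef
  -- basic bounds on d, Lr, ε
  have hLr : (400:ℝ) ≤ Lr := by
    have h1 : (2:ℝ)^(400:ℝ) = 1 / (2:ℝ)^(-(400:ℝ)) := by
      rw [Real.rpow_neg (by norm_num : (0:ℝ) ≤ 2), one_div, inv_inv]
    have h2 : (1:ℝ) / (2:ℝ)^(-(400:ℝ)) ≤ 1 / d := one_div_le_one_div_of_le hd0 hdlt.le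
    have h3 : Real.logb 2 ((2:ℝ)^(400:ℝ)) ≤ Lr := by
      rw [hLrdef, h1]
      exact Real.logb_le_logb_of_le one_lt_two (by positivity) h2
    rwa [Real.logb_rpow two_pos (by norm_num)] at h3
  have hdL : d = (2:ℝ)^(-Lr) := by
    have h1 : Lr = -Real.logb 2 d := by rw [hLrdef, one_div, Real.logb_inv]
    rw [h1, neg_neg, Real.rpow_logb two_pos (by norm_num) hd0]
  have hεval : d ^ β = (2:ℝ)^(-(β*Lr)) := by
    calc d ^ β = ((2:ℝ)^(-Lr)) ^ β := by rw [← hdL]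
      _ = (2:ℝ)^(-Lr*β) := (Real.rpow_mul (by norm_num) _ _).symm
      _ = (2:ℝ)^(-(β*Lr)) := by ring_nf
  have hβL : (200:ℝ) ≤ β * Lr := by nlinarith
  have hε0 : (0:ℝ) < d ^ β := Real.rpow_pos_of_pos hd0 β
  have hε1 : d ^ β ≤ 1/100 := by
    rw [hεval]
    calc (2:ℝ)^(-(β*Lr)) ≤ (2:ℝ)^(-(7:ℝ)) :=
          Real.rpow_le_rpow_of_exponent_le one_le_two (by linarith)
      _ ≤ 1/100 := by rw [aux_rpow7]; norm_num
  set l := Nat.floor (2 * β * Lr) with hldef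
  have hl400 : 400 ≤ l := Nat.le_floor (by push_cast; nlinarith)
  have hllow : 2*β*Lr - 1 < (l:ℝ) := Nat.sub_one_lt_floor _
  have hlr : (400:ℝ) ≤ (l:ℝ) := by exact_mod_cast hl400
  -- basic p facts
  have hps : Summable p := by
    by_contra h
    rw [tsum_eq_zero_of_not_summable h] at hp1
    norm_num at hp1
  have hple : ∀ t, p t ≤ 1 := by
    intro t
    have h := Summable.le_tsum hps t (fun j _ => hp0 j)
    rwa [hp1] at h
  have hn2 : ∀ t : ℕ+ × ℕ+, (2:ℝ) ≤ (t.1:ℝ) + (t.2:ℝ) := by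
    intro t
    have h1 : (1:ℝ) ≤ (t.1:ℝ) := by exact_mod_cast t.1.one_le
    have h2 : (1:ℝ) ≤ (t.2:ℝ) := by exact_mod_cast t.2.one_le
    linarith
  set x := ∑' t : ℕ+ × ℕ+, ((t.1:ℝ) + (t.2:ℝ)) * p t with hxdef
  have hx2 : 2 ≤ x := by
    have h2 : ∑' t : ℕ+ × ℕ+, 2 * p t ≤ x :=
      Summable.tsum_le_tsum (fun t => mul_le_mul_of_nonneg_right (hn2 t) (hp0 t)) (hps.mul_left 2) hxs
    rwa [tsum_mul_left, hp1, mul_one] at h2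
  -- entropy facts
  have hentnn : ∀ t, 0 ≤ -(p t * Real.log (p t)) := by
    intro t
    have h := Real.log_nonpos (hp0 t) (hple t)
    nlinarith [hp0 t]
  have hHb : (fun t : ℕ+ × ℕ+ => -(p t * Real.logb 2 (p t)))
      = fun t => -(p t * Real.log (p t)) / Real.log 2 := by
    funext t; rw [Real.logb]; ring
  have hents : Summable (fun t : ℕ+ × ℕ+ => -(p t * Real.log (p t))) := by
    by_contra h
    have h2 : ¬ Summable (fun t : ℕ+ × ℕ+ => -(p t * Real.logb 2 (p t))) := by
      rw [hHb]
      intro hcon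
      apply h
      have h3 := hcon.mul_right (Real.log 2)
      refine h3.congr fun t => ?_
      field_simp
    rw [tsum_eq_zero_of_not_summable h2] at hH
    nlinarith
  set S := ∑' t : ℕ+ × ℕ+, -(p t * Real.log (p t)) with hSdef
  have hS : (1 - d ^ β) * x * Real.log 2 ≤ S := by
    have he : ∑' t : ℕ+ × ℕ+, -(p t * Real.logb 2 (p t)) = S / Real.log 2 := by
      rw [hHb, tsum_div_const]
    rw [he] at hH
    have h4 := mul_le_mul_of_nonneg_right hH hl2pos.le
    rwa [div_mul_cancel₀ _ (ne_of_gt hl2pos)] at h4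
  -- the x ≤ 8 bound via Gibbs with exponent 3/4
  obtain ⟨hbs, _⟩ := aux_geom2 (show (0:ℝ) < 3/4 by norm_num)
  have hb_pos : ∀ t : ℕ+ × ℕ+, 0 < (2:ℝ)^(-(3/4 * ((t.1:ℝ)+(t.2:ℝ)))) :=
    fun t => Real.rpow_pos_of_pos two_pos _
  have hZb : ∑' t : ℕ+ × ℕ+, (2:ℝ)^(-(3/4 * ((t.1:ℝ)+(t.2:ℝ)))) ≤ 9/4 := by
    have h := aux_geom2_le (show (0:ℝ) < 3/4 by norm_num) (show (0:ℝ) ≤ 3/2 by norm_num)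
      (by nlinarith [aux_rpow34])
    calc ∑' t : ℕ+ × ℕ+, (2:ℝ)^(-(3/4 * ((t.1:ℝ)+(t.2:ℝ)))) ≤ (3/2:ℝ)^2 := h
      _ = 9/4 := by norm_num
  have hgibbs34 : ∀ t : ℕ+ × ℕ+, -(p t * Real.log (p t)) ≤
      3/4 * Real.log 2 * (((t.1:ℝ)+(t.2:ℝ)) * p t)
        + ((2:ℝ)^(-(3/4 * ((t.1:ℝ)+(t.2:ℝ)))) - p t) := by
    intro t
    have hlogb : Real.log ((2:ℝ)^(-(3/4 * ((t.1:ℝ)+(t.2:ℝ)))))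
        = -(3/4 * ((t.1:ℝ)+(t.2:ℝ))) * Real.log 2 := Real.log_rpow two_pos _
    calc -(p t * Real.log (p t))
        ≤ -(p t * Real.log ((2:ℝ)^(-(3/4 * ((t.1:ℝ)+(t.2:ℝ))))))
          + ((2:ℝ)^(-(3/4 * ((t.1:ℝ)+(t.2:ℝ)))) - p t) := aux_gibbs (hp0 t) (hb_pos t)
      _ = 3/4 * Real.log 2 * (((t.1:ℝ)+(t.2:ℝ)) * p t)
          + ((2:ℝ)^(-(3/4 * ((t.1:ℝ)+(t.2:ℝ)))) - p t) := by rw [hlogb]; ring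
  have hSle : S ≤ 3/4 * Real.log 2 * x + 5/4 := by
    have hrhs : Summable (fun t : ℕ+ × ℕ+ => 3/4 * Real.log 2 * (((t.1:ℝ)+(t.2:ℝ)) * p t)
        + ((2:ℝ)^(-(3/4 * ((t.1:ℝ)+(t.2:ℝ)))) - p t)) := (hxs.mul_left _).add (hbs.sub hps)
    have h := Summable.tsum_le_tsum hgibbs34 hents hrhs
    rw [Summable.tsum_add (hxs.mul_left _) (hbs.sub hps), tsum_mul_left, Summable.tsum_sub hbs hps, hp1] at h
    rw [hSdef, hxdef]
    linarith [hZb]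
  have hx0 : (0:ℝ) ≤ x := by linarith
  have hx8 : x ≤ 8 := by
    have hy0 : (0:ℝ) ≤ x * Real.log 2 := mul_nonneg hx0 hl2pos.le
    have hz : d ^ β * (x * Real.log 2) ≤ 1/100 * (x * Real.log 2) :=
      mul_le_mul_of_nonneg_right hε1 hy0
    have hxl : 0.6931 * x ≤ Real.log 2 * x := mul_le_mul_of_nonneg_right hl2a hx0
    nlinarith [hS, hSle]
  -- the KL divergence f and its bound
  set f : ℕ+ × ℕ+ → ℝ :=
    fun t => ((t.1:ℝ)+(t.2:ℝ)) * p t * Real.log 2 + p t * Real.log (p t) with hfdef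
  have hfs : Summable f := by
    refine ((hxs.mul_right (Real.log 2)).sub hents).congr fun t => ?_
    simp only [hfdef]; ring
  have hDle : ∑' t : ℕ+ × ℕ+, f t ≤ d ^ β * x * Real.log 2 := by
    have he : ∑' t : ℕ+ × ℕ+, f t = x * Real.log 2 - S := by
      have h1 : ∀ t : ℕ+ × ℕ+, f t
          = ((t.1:ℝ)+(t.2:ℝ)) * p t * Real.log 2 - -(p t * Real.log (p t)) := by
        intro t; simp only [hfdef]; ring
      rw [tsum_congr h1, Summable.tsum_sub (hxs.mul_right _) hents, tsum_mul_right]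
    rw [he]
    nlinarith [hS]
  -- split of the KL sum at the threshold l
  set A : ℕ+ × ℕ+ → Prop := fun t => l ≤ (t.1:ℕ) + (t.2:ℕ) with hAdef
  have hnA : ∀ t : ℕ+ × ℕ+, A t → (l:ℝ) ≤ (t.1:ℝ) + (t.2:ℝ) := by
    intro t ht
    have : ((l:ℕ):ℝ) ≤ (((t.1:ℕ) + (t.2:ℕ) : ℕ):ℝ) := by exact_mod_cast ht
    push_cast at this
    convert this using 2
  set F1 : ℕ+ × ℕ+ → ℝ := fun t => if A t then f t else 0 with hF1def
  set F2 : ℕ+ × ℕ+ → ℝ := fun t => if A t then 0 else f t with hF2def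
  have hF1s : Summable F1 := aux_summable_ite hfs A
  have hF2s : Summable F2 := by
    refine (hfs.sub hF1s).congr fun t => ?_
    by_cases h : A t <;> simp [hF1def, hF2def, h]
  have hsplit : ∑' t : ℕ+ × ℕ+, f t = (∑' t, F1 t) + (∑' t, F2 t) := by
    rw [← Summable.tsum_add hF1s hF2s]
    refine tsum_congr fun t => ?_
    by_cases h : A t <;> simp [hF1def, hF2def, h]
  -- T, PA, W
  set T := ∑' t : ℕ+ × ℕ+, (if A t then ((t.1:ℝ)+(t.2:ℝ)) * p t else 0) with hTdef
  have hTs : Summable (fun t : ℕ+ × ℕ+ => if A t then ((t.1:ℝ)+(t.2:ℝ)) * p t else 0) :=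
    aux_summable_ite hxs A
  have hT0 : 0 ≤ T := by
    refine tsum_nonneg fun t => ?_
    by_cases h : A t <;> simp [h]
    exact mul_nonneg (by positivity) (hp0 t)
  set PA := ∑' t : ℕ+ × ℕ+, (if A t then p t else 0) with hPAdef
  have hPAs : Summable (fun t : ℕ+ × ℕ+ => if A t then p t else 0) := aux_summable_ite hps A
  have hPA0 : 0 ≤ PA := by
    refine tsum_nonneg fun t => ?_
    by_cases h : A t <;> simp [h, hp0 t]
  obtain ⟨hrs, _⟩ := aux_geom2 (show (0:ℝ) < 3/5 by norm_num)
  set W := ∑' t : ℕ+ × ℕ+, (if A t then (2:ℝ)^(-(3/5 * ((t.1:ℝ)+(t.2:ℝ)))) else 0) with hWdef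
  have hWs : Summable (fun t : ℕ+ × ℕ+ =>
      if A t then (2:ℝ)^(-(3/5 * ((t.1:ℝ)+(t.2:ℝ)))) else 0) := aux_summable_ite hrs A
  -- lower bound for the complement part: -PA ≤ ∑' F2
  obtain ⟨hqs, _⟩ := aux_geom2 (show (0:ℝ) < 1 by norm_num)
  have hq_pos : ∀ t : ℕ+ × ℕ+, 0 < (2:ℝ)^(-(1 * ((t.1:ℝ)+(t.2:ℝ)))) :=
    fun t => Real.rpow_pos_of_pos two_pos _
  have hZq : ∑' t : ℕ+ × ℕ+, (2:ℝ)^(-(1 * ((t.1:ℝ)+(t.2:ℝ)))) ≤ 1 := by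
    have h := aux_geom2_le (show (0:ℝ) < 1 by norm_num) zero_le_one
      (by rw [aux_rpow1]; norm_num)
    calc ∑' t : ℕ+ × ℕ+, (2:ℝ)^(-(1 * ((t.1:ℝ)+(t.2:ℝ)))) ≤ (1:ℝ)^2 := h
      _ = 1 := one_pow 2
  have hfq : ∀ t : ℕ+ × ℕ+, p t - (2:ℝ)^(-(1 * ((t.1:ℝ)+(t.2:ℝ)))) ≤ f t := by
    intro t
    have hg := aux_gibbs (hp0 t) (hq_pos t)
    have hlq : Real.log ((2:ℝ)^(-(1 * ((t.1:ℝ)+(t.2:ℝ)))))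
        = -(1 * ((t.1:ℝ)+(t.2:ℝ))) * Real.log 2 := Real.log_rpow two_pos _
    rw [hlq] at hg
    simp only [hfdef]
    nlinarith [hg]
  have hF2low : ∀ t : ℕ+ × ℕ+,
      (if A t then 0 else p t) - (2:ℝ)^(-(1 * ((t.1:ℝ)+(t.2:ℝ)))) ≤ F2 t := by
    intro t
    by_cases h : A t
    · simp only [hF2def, if_pos h]
      linarith [hq_pos t]
    · simp only [hF2def, if_neg h]
      exact hfq t
  have hcomp_s : Summable (fun t : ℕ+ × ℕ+ => if A t then 0 else p t) := by
    refine (hps.sub hPAs).congr fun t => ?_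
    by_cases h : A t <;> simp [h]
  have hcomp_sum : ∑' t : ℕ+ × ℕ+, (if A t then 0 else p t) = 1 - PA := by
    have h1 : ∀ t : ℕ+ × ℕ+, (if A t then 0 else p t) = p t - (if A t then p t else 0) := by
      intro t; by_cases h : A t <;> simp [h]
    rw [tsum_congr h1, Summable.tsum_sub hps hPAs, hp1, hPAdef]
  have hDAc : -PA ≤ ∑' t, F2 t := by
    have h := Summable.tsum_le_tsum hF2low (hcomp_s.sub hqs) hF2s
    rw [Summable.tsum_sub hcomp_s hqs, hcomp_sum] at h
    linarith [hZq]
  -- lower bound for the tail part: (2/5) log 2 * T - W ≤ ∑' F1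
  have hr_pos : ∀ t : ℕ+ × ℕ+, 0 < (2:ℝ)^(-(3/5 * ((t.1:ℝ)+(t.2:ℝ)))) :=
    fun t => Real.rpow_pos_of_pos two_pos _
  have hF1low : ∀ t : ℕ+ × ℕ+,
      (if A t then 2/5 * Real.log 2 * (((t.1:ℝ)+(t.2:ℝ)) * p t) else 0)
        - (if A t then (2:ℝ)^(-(3/5 * ((t.1:ℝ)+(t.2:ℝ)))) else 0) ≤ F1 t := by
    intro t
    by_cases h : A t
    · simp only [hF1def, if_pos h]
      have hg := aux_gibbs (hp0 t) (hr_pos t)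
      have hlr : Real.log ((2:ℝ)^(-(3/5 * ((t.1:ℝ)+(t.2:ℝ)))))
          = -(3/5 * ((t.1:ℝ)+(t.2:ℝ))) * Real.log 2 := Real.log_rpow two_pos _
      rw [hlr] at hg
      simp only [hfdef]
      nlinarith [hg, hp0 t]
    · simp [hF1def, if_neg h]
  have hs1 : Summable (fun t : ℕ+ × ℕ+ =>
      if A t then 2/5 * Real.log 2 * (((t.1:ℝ)+(t.2:ℝ)) * p t) else 0) :=
    aux_summable_ite (hxs.mul_left (2/5 * Real.log 2)) A
  have hs1tsum : ∑' t : ℕ+ × ℕ+,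
      (if A t then 2/5 * Real.log 2 * (((t.1:ℝ)+(t.2:ℝ)) * p t) else 0)
        = 2/5 * Real.log 2 * T := by
    have h1 : ∀ t : ℕ+ × ℕ+,
        (if A t then 2/5 * Real.log 2 * (((t.1:ℝ)+(t.2:ℝ)) * p t) else 0)
          = 2/5 * Real.log 2 * (if A t then ((t.1:ℝ)+(t.2:ℝ)) * p t else 0) := by
      intro t; by_cases h : A t <;> simp [h]
    rw [tsum_congr h1, tsum_mul_left, hTdef]
  have hDA : 2/5 * Real.log 2 * T - W ≤ ∑' t, F1 t := by
    have h := Summable.tsum_le_tsum hF1low (hs1.sub hWs) hF1s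
    rw [Summable.tsum_sub hs1 hWs, hs1tsum] at h
    linarith
  -- W ≤ d^β
  obtain ⟨h340s, _⟩ := aux_geom2 (show (0:ℝ) < 3/40 by norm_num)
  have hW : W ≤ d ^ β := by
    have hptw : ∀ t : ℕ+ × ℕ+,
        (if A t then (2:ℝ)^(-(3/5 * ((t.1:ℝ)+(t.2:ℝ)))) else 0)
          ≤ (2:ℝ)^(-(21/40 * (l:ℝ))) * (2:ℝ)^(-(3/40 * ((t.1:ℝ)+(t.2:ℝ)))) := by
      intro t
      by_cases h : A t
      · simp only [if_pos h]
        have hn := hnA t h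
        have hsplit2 : (2:ℝ)^(-(3/5 * ((t.1:ℝ)+(t.2:ℝ))))
            = (2:ℝ)^(-(21/40 * ((t.1:ℝ)+(t.2:ℝ)))) * (2:ℝ)^(-(3/40 * ((t.1:ℝ)+(t.2:ℝ)))) := by
          rw [← Real.rpow_add two_pos]; congr 1; ring
        rw [hsplit2]
        refine mul_le_mul_of_nonneg_right ?_ (Real.rpow_pos_of_pos two_pos _).le
        exact Real.rpow_le_rpow_of_exponent_le one_le_two (by linarith)
      · simp only [if_neg h]
        positivity
    have h := Summable.tsum_le_tsum hptw hWs (h340s.mul_left _)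
    rw [tsum_mul_left] at h
    have hZ3 : ∑' t : ℕ+ × ℕ+, (2:ℝ)^(-(3/40 * ((t.1:ℝ)+(t.2:ℝ)))) ≤ 441 := by
      have h3 := aux_geom2_le (show (0:ℝ) < 3/40 by norm_num) (show (0:ℝ) ≤ 21 by norm_num)
        (by nlinarith [aux_rpow340])
      calc ∑' t : ℕ+ × ℕ+, (2:ℝ)^(-(3/40 * ((t.1:ℝ)+(t.2:ℝ)))) ≤ (21:ℝ)^2 := h3
        _ = 441 := by norm_num
    have hexp : β * Lr + 9 ≤ 21/40 * (l:ℝ) := by linarith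
    have hc0 : (2:ℝ)^(-(21/40 * (l:ℝ))) ≤ (2:ℝ)^(-(β*Lr + 9)) :=
      Real.rpow_le_rpow_of_exponent_le one_le_two (by linarith)
    have h29 : (2:ℝ)^(-(β*Lr + 9)) = d ^ β * (2:ℝ)^(-(9:ℝ)) := by
      rw [hεval, ← Real.rpow_add two_pos]; congr 1; ring
    have hZ30 : (0:ℝ) ≤ ∑' t : ℕ+ × ℕ+, (2:ℝ)^(-(3/40 * ((t.1:ℝ)+(t.2:ℝ)))) :=
      tsum_nonneg fun t => (Real.rpow_pos_of_pos two_pos _).le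
    have hc00 : (0:ℝ) ≤ (2:ℝ)^(-(21/40 * (l:ℝ))) := (Real.rpow_pos_of_pos two_pos _).le
    rw [h29, aux_rpow9] at hc0
    rw [hWdef]
    calc W ≤ (2:ℝ)^(-(21/40 * (l:ℝ))) * ∑' t : ℕ+ × ℕ+, (2:ℝ)^(-(3/40 * ((t.1:ℝ)+(t.2:ℝ)))) := h
      _ ≤ (d ^ β * (1/512)) * 441 := by
          apply mul_le_mul hc0 hZ3 hZ30 (by positivity)
      _ ≤ d ^ β := by linarith [hε0.le]
  -- l * PA ≤ T
  have hPAT : (l:ℝ) * PA ≤ T := by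
    have hptw : ∀ t : ℕ+ × ℕ+, (l:ℝ) * (if A t then p t else 0)
        ≤ (if A t then ((t.1:ℝ)+(t.2:ℝ)) * p t else 0) := by
      intro t
      by_cases h : A t
      · simp only [if_pos h]
        exact mul_le_mul_of_nonneg_right (hnA t h) (hp0 t)
      · simp [if_neg h]
    have h := Summable.tsum_le_tsum hptw (hPAs.mul_left _) hTs
    rwa [tsum_mul_left] at h
  -- final assembly
  have hchain : 2/5 * Real.log 2 * T ≤ d ^ β * x * Real.log 2 + W + PA := by
    have h1 : (∑' t, F1 t) + (∑' t, F2 t) ≤ d ^ β * x * Real.log 2 := by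
      rw [← hsplit]; exact hDle
    linarith [hDA, hDAc]
  have h400PA : 400 * PA ≤ T := by
    have h1 : (400:ℝ) * PA ≤ (l:ℝ) * PA := mul_le_mul_of_nonneg_right hlr hPA0
    linarith
  have hεx : d ^ β * x * Real.log 2 ≤ d ^ β * 8 * Real.log 2 := by
    have := mul_le_mul_of_nonneg_left hx8 hε0.le
    exact mul_le_mul_of_nonneg_right this hl2pos.le
  have hTl2 : 2/5 * 0.6931 * T ≤ 2/5 * Real.log 2 * T :=
    mul_le_mul_of_nonneg_right (by linarith) hT0
  have hεl2 : d ^ β * 8 * Real.log 2 ≤ d ^ β * 8 * 0.6932 :=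
    mul_le_mul_of_nonneg_left hl2b (by positivity)
  -- 0.27724 T ≤ 5.5456 ε + ε + T/400
  linarith [hchain, hW, h400PA, hT0, hε0.le, hεx, hεl2, hTl2]
end
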